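/- arXiv:2312.14483 — 7 statements merged into one kernel-verified Lean document; each statement's English description precedes it below -/
import Mathlib

section
/- Let n ≥ 1 and let t_1, …, t_{n+1} be pairwise distinct real numbers. Let L be the collocation matrix of the Newton basis at these nodes. Then L = F_n · F_{n−1} · ⋯ · F_1 · D, where for i = 1, …, n, F_i is the (n+1)×(n+1) lower bidiagonal matrix with unit diagonal whose only possibly nonzero off-diagonal entries are (F_i)_{p,p−1} = m_{p,p−i} for p = i+1, …, n+1, with m_{p,q} := ∏_{k=1}^{q−1} (t_p − t_{p−k})/(t_{p−1} − t_{p−k−1}) (so m_{p,1} = 1), and D is the diagonal matrix with diagonal entries p_i := ∏_{k=1}^{i−1}(t_i − t_k) for i = 1, …, n+1 (empty products equal 1). -/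
/-!
Write `H_i := F_n ⋯ F_i`, so that `H_{n+1} = 1` and `H_i = H_{i+1} F_i`. With 0-based row and column
indices `P, Q`, the matrix `H_i` has the explicit entries
`(H_i)_{P,Q} = ∏_{k=i}^{Q} (t_{P+1} − t_k)/(t_{Q+1} − t_k)` for `i − 1 ≤ Q ≤ P`, and agrees with the
identity elsewhere. Right multiplication by `F_i` adds `m_{Q+2,Q+2−i}` times column `Q+1` to
column `Q`; after clearing denominators, the recursion for these entries is the identity
`t_{P+1} − t_i = (t_{Q+1} − t_i) + (t_{P+1} − t_{Q+1})`. Finally `H_1 D = L`, since `D` supplies the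
missing denominators `p_{Q+1} = ∏_{k=1}^{Q} (t_{Q+1} − t_k)`.
-/

open Finset

/-- Off-diagonal entries of the bidiagonal factorization (1-based indices):
`m_{p,q} = ∏_{k=1}^{q−1} (t_p − t_{p−k})/(t_{p−1} − t_{p−k−1})`. -/
noncomputable def mEntry (t : ℕ → ℝ) (p q : ℕ) : ℝ :=
  ∏ k ∈ Finset.Icc 1 (q - 1), (t p - t (p - k)) / (t (p - 1) - t (p - k - 1))

/-- Diagonal entries `p_i = ∏_{k=1}^{i−1} (t_i − t_k)` (1-based index `i`). -/
noncomputable def pEntry (t : ℕ → ℝ) (i : ℕ) : ℝ :=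
  ∏ k ∈ Finset.Icc 1 (i - 1), (t i - t k)

/-- `F_i`: lower bidiagonal matrix with unit diagonal whose only possibly nonzero
off-diagonal entries are `(F_i)_{p,p−1} = m_{p,p−i}` for `p = i+1, …, n+1`
(1-based `p`; rows/columns indexed by `Fin (n+1)`, entry `(p,q)` has 1-based
indices `p.val+1`, `q.val+1`). -/
noncomputable def Fmat (n : ℕ) (t : ℕ → ℝ) (i : ℕ) :
    Matrix (Fin (n + 1)) (Fin (n + 1)) ℝ :=
  Matrix.of fun p q =>
    if p.val = q.val then 1
    else if p.val = q.val + 1 ∧ i ≤ p.val then mEntry t (p.val + 1) (p.val + 1 - i)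
    else 0

/-- The diagonal matrix `D` with entries `p_1, …, p_{n+1}`. -/
noncomputable def Dmat (n : ℕ) (t : ℕ → ℝ) :
    Matrix (Fin (n + 1)) (Fin (n + 1)) ℝ :=
  Matrix.diagonal fun i => pEntry t (i.val + 1)

lemma div_prod_Icc_eq_add {K : Type*} [Field K] (a d : ℕ → K) {i Q : ℕ} (hiQ : i ≤ Q)
    (hd : ∀ k ∈ Icc i Q, d k ≠ 0) (ha : a i = d i + a (Q + 1)) :
    (∏ k ∈ Icc i Q, a k) / ∏ k ∈ Icc i Q, d k =
      (∏ k ∈ Icc (i + 1) Q, a k) / (∏ k ∈ Icc (i + 1) Q, d k) +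
        (∏ k ∈ Icc (i + 1) (Q + 1), a k) / ∏ k ∈ Icc i Q, d k := by
  have hdi : d i ≠ 0 := hd i (left_mem_Icc.2 hiQ)
  have hD : ∏ k ∈ Ioc i Q, d k ≠ 0 :=
    prod_ne_zero_iff.2 fun k hk => hd k (Ioc_subset_Icc_self hk)
  rw [← mul_prod_Ioc_eq_prod_Icc hiQ, ← mul_prod_Ioc_eq_prod_Icc hiQ,
    prod_Icc_succ_top (by omega), Icc_add_one_left_eq_Ioc]
  field_simp
  rw [ha]
  ring

/-- The entries of `H_i = F_n ⋯ F_i`, with the 0-based indices of `Fmat`. -/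
noncomputable def hEntry (t : ℕ → ℝ) (i P Q : ℕ) : ℝ :=
  if i ≤ Q + 1 ∧ Q ≤ P then ∏ k ∈ Icc i Q, (t (P + 1) - t k) / (t (Q + 1) - t k)
  else if P = Q then 1 else 0

noncomputable def Hmat (n : ℕ) (t : ℕ → ℝ) (i : ℕ) : Matrix (Fin (n + 1)) (Fin (n + 1)) ℝ :=
  Matrix.of fun p q => hEntry t i p q

section

variable {n : ℕ} {t : ℕ → ℝ}

lemma mEntry_eq_div {i Q : ℕ} (hi : 1 ≤ i) (hiQ : i ≤ Q + 1) :
    mEntry t (Q + 2) (Q + 2 - i) =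
      (∏ k ∈ Icc (i + 1) (Q + 1), (t (Q + 2) - t k)) / ∏ k ∈ Icc i Q, (t (Q + 1) - t k) := by
  rw [mEntry, prod_div_distrib]
  congr 1
  · refine prod_nbij' (fun k => Q + 2 - k) (fun k => Q + 2 - k) ?_ ?_ ?_ ?_ ?_ <;>
      intro k hk <;> simp only [mem_Icc] at hk ⊢ <;> omega
  · refine prod_nbij' (fun k => Q + 1 - k) (fun k => Q + 1 - k) ?_ ?_ ?_ ?_ ?_ <;>
      intro k hk <;> simp only [mem_Icc] at hk ⊢
    all_goals first | omega | (congr 2; omega)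

lemma hEntry_of_lt {i P Q : ℕ} (h : P < Q) : hEntry t i P Q = 0 := by
  rw [hEntry, if_neg (by omega), if_neg h.ne]

lemma hEntry_self (ht : Set.InjOn t (Set.Icc 1 (n + 1))) {i Q : ℕ} (hi : 1 ≤ i) (hQ : Q ≤ n) :
    hEntry t i Q Q = 1 := by
  by_cases hiQ : i ≤ Q + 1
  · rw [hEntry, if_pos ⟨hiQ, le_rfl⟩]
    refine prod_eq_one fun k hk => div_self (sub_ne_zero.2 (ht.ne ?_ ?_ ?_)) <;>
      simp only [mem_Icc, Set.mem_Icc] at hk ⊢ <;> omega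
  · rw [hEntry, if_neg (by omega), if_pos rfl]

lemma hEntry_eq_add_mul (ht : Set.InjOn t (Set.Icc 1 (n + 1))) {i P Q : ℕ} (hi : 1 ≤ i)
    (hP : P ≤ n) :
    hEntry t i P Q = hEntry t (i + 1) P Q +
      if Q < n ∧ i ≤ Q + 1 then hEntry t (i + 1) P (Q + 1) * mEntry t (Q + 2) (Q + 2 - i)
      else 0 := by
  rcases le_or_gt P Q with hPQ | hQP
  · rw [hEntry_of_lt (Nat.lt_succ_of_le hPQ), zero_mul, ite_self, add_zero]
    rcases hPQ.lt_or_eq with hPQ | rfl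
    · rw [hEntry_of_lt hPQ, hEntry_of_lt hPQ]
    · rw [hEntry_self ht hi hP, hEntry_self ht (by omega) hP]
  rcases lt_trichotomy i (Q + 1) with hiQ | rfl | hiQ
  · have hE : ∏ k ∈ Icc (i + 1) (Q + 1), (t (Q + 2) - t k) ≠ 0 := by
      refine prod_ne_zero_iff.2 fun k hk => sub_ne_zero.2 (ht.ne ?_ ?_ ?_) <;>
        simp only [mem_Icc, Set.mem_Icc] at hk ⊢ <;> omega
    have hsucc : hEntry t (i + 1) P (Q + 1) =
        ∏ k ∈ Icc (i + 1) (Q + 1), (t (P + 1) - t k) / (t (Q + 2) - t k) :=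
      if_pos ⟨by omega, hQP⟩
    -- the numerator of `mEntry` cancels the denominators of `hEntry t (i + 1) P (Q + 1)`
    rw [if_pos ⟨by omega, hiQ.le⟩, hsucc, hEntry, if_pos ⟨by omega, hQP.le⟩, hEntry,
      if_pos ⟨by omega, hQP.le⟩, mEntry_eq_div hi hiQ.le, prod_div_distrib, prod_div_distrib,
      prod_div_distrib, div_mul_div_cancel₀ hE]
    refine div_prod_Icc_eq_add _ _ (by omega) (fun k hk => sub_ne_zero.2 (ht.ne ?_ ?_ ?_))
      (by ring) <;> simp only [mem_Icc, Set.mem_Icc] at hk ⊢ <;> omega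
  · -- all products involved are empty
    simp [hEntry, mEntry, hQP, hQP.le, hQP.ne', show Q < n by omega]
  · simp [hEntry, hQP.ne', show ¬i ≤ Q + 1 by omega, show ¬i ≤ Q by omega]

lemma of_mul_Fmat_apply (i : ℕ) (a : ℕ → ℕ → ℝ) (p q : Fin (n + 1)) :
    (Matrix.of (fun p q : Fin (n + 1) => a p q) * Fmat n t i) p q = a p q +
      if q.val < n ∧ i ≤ q.val + 1 then a p (q + 1) * mEntry t (q + 2) (q + 2 - i) else 0 := by
  have hcol : ∀ r : ℕ, (if r = q then 1 else if r = q + 1 ∧ i ≤ r then mEntry t (r + 1) (r + 1 - i)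
      else 0) = (if r = q then 1 else 0) +
        if r = q + 1 then (if i ≤ q.val + 1 then mEntry t (q + 2) (q + 2 - i) else 0) else 0 := by
    intro r
    by_cases hr : r = q + 1
    · subst hr; simp
    · simp [hr]
  rw [Matrix.mul_apply]
  simp only [Matrix.of_apply, Fmat]
  rw [Fin.sum_univ_eq_sum_range (fun r => a p r * if r = q then 1 else
    if r = q + 1 ∧ i ≤ r then mEntry t (r + 1) (r + 1 - i) else 0)]
  simp only [hcol, mul_add, sum_add_distrib, mul_ite, mul_one, mul_zero, sum_ite_eq', mem_range,
    q.isLt, if_true, Nat.add_lt_add_iff_right]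
  rw [ite_and]

lemma Hmat_eq_Hmat_succ_mul_Fmat (ht : Set.InjOn t (Set.Icc 1 (n + 1))) {i : ℕ} (hi : 1 ≤ i) :
    Hmat n t i = Hmat n t (i + 1) * Fmat n t i := by
  ext p q
  rw [Hmat, Hmat, of_mul_Fmat_apply, Matrix.of_apply]
  exact hEntry_eq_add_mul ht hi (Nat.lt_succ_iff.1 p.isLt)

lemma Hmat_top : Hmat n t (n + 1) = 1 := by
  ext p q
  simp only [Hmat, Matrix.of_apply, Matrix.one_apply, hEntry, Fin.ext_iff,
    Icc_eq_empty_of_lt q.isLt, prod_empty]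
  split_ifs <;> first | rfl | omega

lemma prod_map_range_Fmat (ht : Set.InjOn t (Set.Icc 1 (n + 1))) {j : ℕ} (hj : j ≤ n) :
    ((List.range j).map fun k => Fmat n t (n - k)).prod = Hmat n t (n + 1 - j) := by
  induction j with
  | zero => simp [Hmat_top]
  | succ j ih =>
    rw [List.range_succ, List.map_append, List.prod_append, ih (by omega), List.map_singleton,
      List.prod_singleton, show n + 1 - j = n - j + 1 by omega,
      ← Hmat_eq_Hmat_succ_mul_Fmat ht (by omega), show n + 1 - (j + 1) = n - j by omega]

lemma Hmat_one_mul_Dmat (ht : Set.InjOn t (Set.Icc 1 (n + 1))) :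
    Hmat n t 1 * Dmat n t = Matrix.of fun p q => ∏ k ∈ Icc 1 q.val, (t (p.val + 1) - t k) := by
  ext p q
  rw [Dmat, Matrix.mul_diagonal, Hmat, Matrix.of_apply, Matrix.of_apply, pEntry,
    Nat.add_sub_cancel]
  rcases le_or_gt q.val p.val with hqp | hpq
  · have hD : ∏ k ∈ Icc 1 q.val, (t (q.val + 1) - t k) ≠ 0 := by
      refine prod_ne_zero_iff.2 fun k hk => sub_ne_zero.2 (ht.ne ?_ ?_ ?_) <;>
        simp only [mem_Icc, Set.mem_Icc] at hk ⊢ <;> omega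
    rw [hEntry, if_pos ⟨by omega, hqp⟩, prod_div_distrib, div_mul_cancel₀ _ hD]
  · rw [hEntry_of_lt hpq, zero_mul]
    exact (prod_eq_zero (mem_Icc.2 ⟨by omega, hpq⟩) (sub_self _)).symm

end

theorem newton_collocation_bidiagonal_factorization_general
    (n : ℕ) (t : ℕ → ℝ)
    (ht : ∀ i j, 1 ≤ i → i ≤ n + 1 → 1 ≤ j → j ≤ n + 1 → i ≠ j → t i ≠ t j)
    (L : Matrix (Fin (n + 1)) (Fin (n + 1)) ℝ)
    (hL : ∀ i j, L i j = ∏ k ∈ Finset.Icc 1 j.val, (t (i.val + 1) - t k)) :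
    L = ((List.range n).map (fun k => Fmat n t (n - k))).prod * Dmat n t := by
  have hinj : Set.InjOn t (Set.Icc 1 (n + 1)) := fun i hi j hj hij =>
    by_contra fun hne => ht i j hi.1 hi.2 hj.1 hj.2 hne hij
  rw [prod_map_range_Fmat hinj le_rfl, Nat.add_sub_cancel_left, Hmat_one_mul_Dmat hinj]
  exact Matrix.ext hL

/-- the collocation matrix `L` of the Newton basis at pairwise
distinct nodes `t 1, …, t (n+1)` factorizes as `L = F_n ⋯ F_1 · D`. -/
theorem newton_collocation_bidiagonal_factorization
    (n : ℕ) (hn : 1 ≤ n) (t : ℕ → ℝ)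
    (ht : ∀ i j, 1 ≤ i → i ≤ n + 1 → 1 ≤ j → j ≤ n + 1 → i ≠ j → t i ≠ t j)
    (L : Matrix (Fin (n + 1)) (Fin (n + 1)) ℝ)
    (hL : ∀ i j, L i j = ∏ k ∈ Finset.Icc 1 j.val, (t (i.val + 1) - t k)) :
    L = ((List.range n).map (fun k => Fmat n t (n - k))).prod * Dmat n t :=
  newton_collocation_bidiagonal_factorization_general n t ht L hL
end

section
/- Let n ≥ 1 and let t_1, …, t_{n+1} be pairwise distinct real numbers. Let L be the collocation matrix of the Newton basis at these nodes. Then L is totally positive if and only if t_1 < t_2 < ⋯ < t_{n+1}. -/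
open Finset

def TotallyPositive {m : ℕ} (A : Matrix (Fin m) (Fin m) ℝ) : Prop :=
  ∀ (r : ℕ) (f g : Fin r → Fin m), StrictMono f → StrictMono g →
    0 ≤ (A.submatrix f g).det

/-!
Write `M_b(a, c)` for the matrix with entries `∏_{b < k ≤ c_q} (t_{a_p} - t_k)`, so that the
minors of `L` are the determinants of the `M_0(a, c)`. The identity
`x - t_{b+1} = (x - t_{d+1}) + (t_{d+1} - t_{b+1})` writes each column of `M_b` as a combination
of two columns of `M_{b+1}` with coefficients `1` and `t_{d+1} - t_{b+1}`, which are nonnegative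
for monotone `t`; by multilinearity `det M_b(a, c)` is a nonnegative combination of determinants
`det M_{b+1}(a, c')`. Once `b + 1 = a_0`, the first row is `(1, 0, …, 0)` or zero, and induction
on the size concludes. Conversely, the entries `L_{m+1,m} = w_{m-1}(t_{m+1})` and
`L_{m+1,m+1} = L_{m+1,m} (t_{m+1} - t_m)` of a totally positive `L` are nonnegative and the first
is nonzero for distinct nodes, so `t_m < t_{m+1}`.
-/

open Matrix

section CommRing

variable {R : Type*} [CommRing R]

theorem prod_Ioc_sub_eq_add_mul (t : ℕ → R) (x : R) {b d : ℕ} (hbd : b ≤ d) :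
    ∏ k ∈ Ioc b d, (x - t k) = ∏ k ∈ Ioc (b + 1) (d + 1), (x - t k) +
      (t (d + 1) - t (b + 1)) * ∏ k ∈ Ioc (b + 1) d, (x - t k) := by
  obtain rfl | hlt := hbd.eq_or_lt
  · simp
  rw [← insert_Ioc_add_one_left_eq_Ioc hlt, prod_insert (by simp), prod_Ioc_succ_top hlt,
    Nat.succ_eq_add_one]
  ring

def newtonMatrix {r : ℕ} (t : ℕ → R) (b : ℕ) (a c : Fin r → ℕ) :
    Matrix (Fin r) (Fin r) R :=
  of fun p q => ∏ k ∈ Ioc b (c q), (t (a p) - t k)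

theorem newtonMatrix_submatrix {r s : ℕ} (t : ℕ → R) (b : ℕ) (a c : Fin r → ℕ)
    (f g : Fin s → Fin r) :
    (newtonMatrix t b a c).submatrix f g = newtonMatrix t b (a ∘ f) (c ∘ g) :=
  rfl

theorem det_newtonMatrix_eq_sum {r : ℕ} (t : ℕ → R) (b : ℕ) (a c : Fin r → ℕ)
    (hc : ∀ q, b ≤ c q) :
    (newtonMatrix t b a c).det = ∑ s : Fin r → Bool,
      (∏ q, if s q then 1 else t (c q + 1) - t (b + 1)) *
        (newtonMatrix t (b + 1) a fun q => if s q then c q + 1 else c q).det := by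
  have hcols : (newtonMatrix t b a c)ᵀ = fun q => ∑ e : Bool, fun p =>
      (if e then 1 else t (c q + 1) - t (b + 1)) *
        ∏ k ∈ Ioc (b + 1) (if e then c q + 1 else c q), (t (a p) - t k) := by
    ext q p
    simp [newtonMatrix, prod_Ioc_sub_eq_add_mul t _ (hc q)]
  rw [← det_transpose, hcols]
  refine (detRowAlternating.toMultilinearMap.map_sum _).trans
    (sum_congr rfl fun s _ => ?_)
  rw [← det_transpose, ← det_mul_column]
  rfl

theorem det_newtonMatrix_eq_zero {r : ℕ} (t : ℕ → R) {b : ℕ} {a c : Fin (r + 1) → ℕ}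
    (hc : Monotone c) (ha₀ : a 0 = b + 1) (hc₀ : b < c 0) :
    (newtonMatrix t b a c).det = 0 :=
  det_eq_zero_of_row_eq_zero 0 fun q => prod_eq_zero
    (mem_Ioc.2 ⟨Nat.lt_succ_self b, hc₀.trans_le (hc (Fin.zero_le q))⟩)
    (by rw [ha₀, sub_self])

theorem det_newtonMatrix_eq_det_succ {r : ℕ} (t : ℕ → R) {b : ℕ} {a c : Fin (r + 1) → ℕ}
    (hc : StrictMono c) (ha₀ : a 0 = b + 1) (hc₀ : c 0 = b) :
    (newtonMatrix t b a c).det = (newtonMatrix t b (a ∘ Fin.succ) (c ∘ Fin.succ)).det := by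
  rw [det_succ_row_zero, Fin.sum_univ_succ, sum_eq_zero fun q _ => ?_]
  · rw [Fin.succAbove_zero, newtonMatrix_submatrix]
    simp [newtonMatrix, hc₀]
  · have : b + 1 ≤ c q.succ := hc₀ ▸ hc (Fin.succ_pos q)
    simp [newtonMatrix, prod_eq_zero (mem_Ioc.2 ⟨Nat.lt_succ_self b, this⟩), ha₀]

end CommRing

theorem StrictMono.ite_add_one_of_injective {ι : Type*} [PartialOrder ι] {c : ι → ℕ}
    (hc : StrictMono c) (s : ι → Bool)
    (hinj : Function.Injective fun q => if s q then c q + 1 else c q) :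
    StrictMono fun q => if s q then c q + 1 else c q := by
  refine Monotone.strictMono_of_injective (fun q q' h => ?_) hinj
  obtain rfl | h := h.eq_or_lt
  · exact le_rfl
  have := hc h
  split_ifs <;> omega

theorem det_newtonMatrix_nonneg {R : Type*} [CommRing R] [PartialOrder R] [IsOrderedRing R]
    {t : ℕ → R} (ht : Monotone t) {r b : ℕ} {a c : Fin r → ℕ} (ha : StrictMono a)
    (hc : StrictMono c) (hab : ∀ p, b < a p) (hbc : ∀ q, b ≤ c q) :
    0 ≤ (newtonMatrix t b a c).det := by
  induction r generalizing b with
  | zero => simp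
  | succ r ih =>
    obtain ⟨m, hm⟩ : ∃ m, a 0 = b + 1 + m := ⟨a 0 - (b + 1), by have := hab 0; omega⟩
    induction m generalizing b c with
    | zero =>
      obtain hc₀ | hc₀ := (hbc 0).eq_or_lt
      · rw [det_newtonMatrix_eq_det_succ t hc hm hc₀.symm]
        exact ih (ha.comp Fin.strictMono_succ) (hc.comp Fin.strictMono_succ)
          (fun _ => hab _) (fun _ => hbc _)
      · rw [det_newtonMatrix_eq_zero t hc.monotone hm hc₀]
    | succ m ihm =>
      have hab₁ : ∀ p, b + 1 < a p := fun p => by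
        have := ha.monotone (Fin.zero_le p)
        omega
      rw [det_newtonMatrix_eq_sum t b a c hbc]
      refine sum_nonneg fun s _ => ?_
      -- a column with `c q = b` has the coefficient `t (b + 1) - t (b + 1) = 0`
      by_cases hzero : ∃ q, s q = false ∧ c q = b
      · obtain ⟨q, hq, hcq⟩ := hzero
        rw [prod_eq_zero (mem_univ q) (by simp [hq, hcq]), zero_mul]
      push Not at hzero
      refine mul_nonneg (prod_nonneg fun q _ => ?_) ?_
      · split_ifs
        · exact zero_le_one
        · exact sub_nonneg.2 (ht (by have := hbc q; omega))
      by_cases hinj : Function.Injective fun q => if s q then c q + 1 else c q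
      · refine ihm (hc.ite_add_one_of_injective s hinj) hab₁ (fun q => ?_) (by omega)
        have hq := hbc q
        split_ifs with hs
        · omega
        · have := hzero q (by simpa using hs)
          omega
      · obtain ⟨q, q', heq, hne⟩ := Function.not_injective_iff.mp hinj
        rw [det_zero_of_column_eq hne fun p => by simp only [newtonMatrix, of_apply, heq]]

theorem lt_of_prod_Icc_sub_nonneg {R : Type*} [CommRing R] [LinearOrder R]
    [IsStrictOrderedRing R] {t : ℕ → R} {x : R} {m : ℕ}
    (hx : ∀ k ∈ Icc 1 (m + 1), x ≠ t k)
    (h₀ : 0 ≤ ∏ k ∈ Icc 1 m, (x - t k)) (h₁ : 0 ≤ ∏ k ∈ Icc 1 (m + 1), (x - t k)) :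
    t (m + 1) < x := by
  have hpos : 0 < ∏ k ∈ Icc 1 m, (x - t k) := h₀.lt_of_ne (prod_ne_zero_iff.2 fun k hk =>
    sub_ne_zero.2 (hx k (Icc_subset_Icc_right (Nat.le_succ m) hk))).symm
  rw [prod_Icc_succ_top (by omega)] at h₁
  exact (sub_nonneg.1 (nonneg_of_mul_nonneg_right h₁ hpos)).lt_of_ne (hx _ (by simp)).symm

namespace TotallyPositive

theorem apply_nonneg {m : ℕ} {A : Matrix (Fin m) (Fin m) ℝ} (hA : TotallyPositive A)
    (i j : Fin m) : 0 ≤ A i j := by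
  have hconst : ∀ k : Fin m, StrictMono fun _ : Fin 1 => k :=
    fun _ p q h => absurd (Subsingleton.elim p q) h.ne
  simpa using hA 1 _ _ (hconst i) (hconst j)

theorem of_monotone {m : ℕ} {t : ℕ → ℝ} (ht : Monotone t) {L : Matrix (Fin m) (Fin m) ℝ}
    (hL : ∀ i j, L i j = ∏ k ∈ Icc 1 j.val, (t (i.val + 1) - t k)) : TotallyPositive L := by
  intro r f g hf hg
  have hsub : L.submatrix f g = newtonMatrix t 0 (fun p => f p + 1) (fun q => g q) := by
    ext p q
    rw [submatrix_apply, hL, newtonMatrix, of_apply, ← Icc_add_one_left_eq_Ioc, zero_add]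
  rw [hsub]
  exact det_newtonMatrix_nonneg ht (fun p q h => by simpa using hf h) hg (fun _ => by omega)
    fun _ => Nat.zero_le _

theorem strictMonoOn {n : ℕ} {t : ℕ → ℝ} (ht : Set.InjOn t (Set.Icc 1 (n + 1)))
    {L : Matrix (Fin (n + 1)) (Fin (n + 1)) ℝ}
    (hL : ∀ i j, L i j = ∏ k ∈ Icc 1 j.val, (t (i.val + 1) - t k)) (hTP : TotallyPositive L) :
    StrictMonoOn t (Set.Icc 1 (n + 1)) := by
  refine strictMonoOn_of_lt_succ Set.ordConnected_Icc fun i _ hi hi' => ?_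
  simp only [Set.mem_Icc, Order.succ_eq_add_one] at hi hi' ⊢
  obtain ⟨m, rfl⟩ : ∃ m, i = m + 1 := ⟨i - 1, by omega⟩
  have hrow (j : Fin (n + 1)) : 0 ≤ ∏ k ∈ Icc 1 j.val, (t (m + 2) - t k) :=
    hL ⟨m + 1, by omega⟩ j ▸ hTP.apply_nonneg _ _
  refine lt_of_prod_Icc_sub_nonneg (fun k hk hmk => ?_) (hrow ⟨m, by omega⟩)
    (hrow ⟨m + 1, by omega⟩)
  rw [mem_Icc] at hk
  have := ht ⟨by omega, by omega⟩ ⟨hk.1, by omega⟩ hmk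
  omega

end TotallyPositive

theorem newton_collocation_totally_positive_iff_increasing_general
    (n : ℕ) (t : ℕ → ℝ)
    (ht : ∀ i j, 1 ≤ i → i ≤ n + 1 → 1 ≤ j → j ≤ n + 1 → i ≠ j → t i ≠ t j)
    (L : Matrix (Fin (n + 1)) (Fin (n + 1)) ℝ)
    (hL : ∀ i j, L i j = ∏ k ∈ Finset.Icc 1 j.val, (t (i.val + 1) - t k)) :
    TotallyPositive L ↔ ∀ i j, 1 ≤ i → i < j → j ≤ n + 1 → t i < t j := by
  constructor
  · intro hTP i j hi hij hj
    have hinj : Set.InjOn t (Set.Icc 1 (n + 1)) := fun i hi j hj =>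
      not_imp_not.1 (ht i j hi.1 hi.2 hj.1 hj.2)
    exact hTP.strictMonoOn hinj hL ⟨hi, by omega⟩ ⟨by omega, hj⟩ hij
  · intro hmono
    have hmonoOn : MonotoneOn t (Set.Icc 1 (n + 1)) := fun i hi j hj hij =>
      hij.eq_or_lt.elim (fun h => h ▸ le_rfl) fun h => (hmono i j hi.1 h hj.2).le
    have hfin := (Set.finite_Icc 1 (n + 1)).image t
    obtain ⟨u, hu, htu⟩ := hmonoOn.exists_monotone_extension hfin.bddBelow hfin.bddAbove
    refine TotallyPositive.of_monotone hu fun i j =>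
      (hL i j).trans (prod_congr rfl fun k hk => ?_)
    rw [mem_Icc] at hk
    rw [htu ⟨by omega, by omega⟩, htu ⟨hk.1, by omega⟩]

/-- the collocation matrix `L` of the Newton basis at pairwise
distinct nodes `t 1, …, t (n+1)` is totally positive iff the nodes are in
strictly increasing order. -/
theorem newton_collocation_totally_positive_iff_increasing
    (n : ℕ) (hn : 1 ≤ n) (t : ℕ → ℝ)
    (ht : ∀ i j, 1 ≤ i → i ≤ n + 1 → 1 ≤ j → j ≤ n + 1 → i ≠ j → t i ≠ t j)
    (L : Matrix (Fin (n + 1)) (Fin (n + 1)) ℝ)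
    (hL : ∀ i j, L i j = ∏ k ∈ Finset.Icc 1 j.val, (t (i.val + 1) - t k)) :
    TotallyPositive L ↔ ∀ i j, 1 ≤ i → i < j → j ≤ n + 1 → t i < t j :=
  newton_collocation_totally_positive_iff_increasing_general n t ht L hL
end

section
/- Let n ≥ 1, let t_1, …, t_{n+1} be pairwise distinct real numbers, let L be the collocation matrix of the Newton basis at these nodes, and let J be the (n+1)×(n+1) diagonal matrix with diagonal entries J_{i,i} = (−1)^{i−1}. Then the matrix L·J is totally positive if and only if t_1 > t_2 > ⋯ > t_{n+1}. -/
/-!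
With `y i = -t (i + 1)`, the matrix `L * J` is the Newton collocation matrix `(w_j (y_i))_{i,j}`,
`w_j z = ∏_{k<j} (z - y_k)`, at the nodes `y`.

If they increase, Neville elimination by divided differences reduces the matrix to the identity:
at stage `c`, row `i ≥ c` holds the divided difference of order `c` on `y_{i-c}, …, y_i`. The
recursion of divided differences shows that stage `c` arises from stage `c + 1` by scaling rows by
`y_i - y_{i-c-1} ≥ 0` and adding to each row the updated row above it; such operations preserve
total positivity. The last stage is the identity, since `[y_0, …, y_i] w_j = δ_{ij}`.

Conversely, the entries `w_{p+1} (y_q) = ∏_{k ≤ p} (y_q - y_k)` are nonnegative, which forces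
`y_p < y_q` for `p < q` by induction on `p`.
-/

open Finset

theorem StrictMono.update_of_succ_eq {k m : ℕ} {f : Fin k → Fin m} (hf : StrictMono f) {a : Fin k}
    {r : Fin m} (hr : (r : ℕ) + 1 = f a) (hnot : r ∉ Set.range f) :
    StrictMono (Function.update f a r) := by
  intro p q hpq
  have hfpq := Fin.lt_def.1 (hf hpq)
  have hne : (f p : ℕ) ≠ r := fun h => hnot ⟨p, Fin.ext h⟩
  simp only [Function.update_apply, Fin.lt_def]
  split_ifs with hp hq hq
  · exact absurd (hp.trans hq.symm ▸ hpq) (lt_irrefl q)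
  · subst hp; omega
  · subst hq; omega
  · exact hfpq

namespace TotallyPositive

open Matrix

variable {m : ℕ} {A B : Matrix (Fin m) (Fin m) ℝ}

theorem nonneg (hA : TotallyPositive A) (i j : Fin m) : 0 ≤ A i j := by
  simpa using hA 1 (fun _ => i) (fun _ => j) (Subsingleton.strictMono _) (Subsingleton.strictMono _)

theorem one : TotallyPositive (1 : Matrix (Fin m) (Fin m) ℝ) := by
  intro r f g hf hg
  -- a nonzero minor of `1` has no zero row or column, which forces `f = g`
  by_contra hneg
  have hdet : ((1 : Matrix (Fin m) (Fin m) ℝ).submatrix f g).det ≠ 0 := by linarith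
  have hfg : Set.range f = Set.range g := by
    apply subset_antisymm
    · rintro _ ⟨a, rfl⟩
      by_contra hga
      exact hdet (det_eq_zero_of_row_eq_zero a fun b =>
        one_apply_ne fun h => hga ⟨b, h.symm⟩)
    · rintro _ ⟨b, rfl⟩
      by_contra hfb
      exact hdet (det_eq_zero_of_column_eq_zero b fun a =>
        one_apply_ne fun h => hfb ⟨a, h⟩)
  rw [(hf.range_inj hg).1 hfg, submatrix_one _ hg.injective, det_one] at hneg
  exact hneg zero_le_one

theorem updateRow_smul_add (hA : TotallyPositive A) {r s : Fin m} (hrs : (r : ℕ) + 1 = s)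
    {c : ℝ} (hc : 0 ≤ c) : TotallyPositive (A.updateRow s (c • A s + A r)) := by
  intro k f g hf hg
  by_cases hs : s ∈ Set.range f
  · obtain ⟨a, rfl⟩ := hs
    have hsub : (A.updateRow (f a) (c • A (f a) + A r)).submatrix f g
        = (A.submatrix f g).updateRow a (c • (A.submatrix f g) a + fun j => A r (g j)) := by
      ext i j
      rcases eq_or_ne i a with rfl | hi
      · simp
      · simp [hi, hf.injective.ne hi]
    rw [hsub, det_updateRow_add, det_updateRow_smul, updateRow_eq_self]
    -- the minor with row `s` replaced by `r` has a repeated row, or it is a minor of `A` since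
    -- `r` is adjacent to `s`
    have hprev : 0 ≤ ((A.submatrix f g).updateRow a fun j => A r (g j)).det := by
      by_cases hr : r ∈ Set.range f
      · obtain ⟨b, rfl⟩ := hr
        have hba : b ≠ a := by rintro rfl; omega
        exact (det_zero_of_row_eq hba (by ext j; simp [hba])).ge
      · have hmono := hf.update_of_succ_eq (a := a) hrs hr
        have hupd : (A.submatrix f g).updateRow a (fun j => A r (g j))
            = A.submatrix (Function.update f a r) g := by
          ext i j
          rcases eq_or_ne i a with rfl | hi
          · simp
          · simp [hi]
        rw [hupd]
        exact hA k _ g hmono hg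
    have := hA k f g hf hg
    positivity
  · have hsub : (A.updateRow s (c • A s + A r)).submatrix f g = A.submatrix f g := by
      ext i j
      have : f i ≠ s := fun h => hs ⟨i, h⟩
      simp [this]
    rw [hsub]
    exact hA k f g hf hg

theorem of_rows_accumulate (hB : TotallyPositive B) (c : ℕ) {d : Fin m → ℝ} (hd : ∀ i, 0 ≤ d i)
    (hlow : ∀ i : Fin m, (i : ℕ) ≤ c → A i = B i)
    (hstep : ∀ i j : Fin m, (i : ℕ) + 1 = j → c < j → A j = d j • B j + A i) :
    TotallyPositive A := by
  -- `C r` interpolates between `B` and `A`; each step `C r → C (r + 1)` is one row operation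
  let C : ℕ → Matrix (Fin m) (Fin m) ℝ := fun r => of fun i => if (i : ℕ) ≤ r then A i else B i
  have hC : ∀ r, TotallyPositive (C r) := by
    intro r
    induction r with
    | zero =>
      convert hB using 1
      ext i : 1
      by_cases hi : (i : ℕ) = 0
      · simp [C, hi, hlow i (by omega)]
      · simp [C, hi]
    | succ r ih =>
      by_cases hr : r + 1 < m ∧ c < r + 1
      · convert ih.updateRow_smul_add (r := ⟨r, by omega⟩) (s := ⟨r + 1, hr.1⟩) rfl
          (hd ⟨r + 1, hr.1⟩) using 1
        ext i : 1
        rcases eq_or_ne i ⟨r + 1, hr.1⟩ with rfl | hi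
        · simp [C, hstep ⟨r, by omega⟩ ⟨r + 1, hr.1⟩ rfl hr.2]
        · have : (i : ℕ) ≠ r + 1 := fun h => hi (Fin.ext h)
          simp [C, hi, Nat.le_succ_iff, this]
      · convert ih using 1
        ext i : 1
        by_cases hi : (i : ℕ) = r + 1
        · simp [C, hi, hlow i (by omega)]
        · simp [C, Nat.le_succ_iff, hi]
  convert hC m using 1
  ext i : 1
  simp [C, i.is_le']

end TotallyPositive

theorem sub_ne_zero_of_injOn_Iic {y : ℕ → ℝ} {n : ℕ} (hy : Set.InjOn y (Set.Iic n)) {a b : ℕ}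
    (hba : b < a) (ha : a ≤ n) : y a - y b ≠ 0 :=
  sub_ne_zero.2 fun h => hba.ne' (hy (Set.mem_Iic.2 ha) (Set.mem_Iic.2 (by omega)) h)

-- `dividedDiff y f s a` is the divided difference `[y_a, …, y_{a+s}] f` of order `s`.
noncomputable def dividedDiff (y f : ℕ → ℝ) : ℕ → ℕ → ℝ
  | 0, a => f a
  | s + 1, a => (dividedDiff y f s (a + 1) - dividedDiff y f s a) / (y (a + s + 1) - y a)

namespace dividedDiff

variable {y f : ℕ → ℝ} {n : ℕ}

theorem eq_zero_of_eqOn_zero {s a : ℕ} (hf : ∀ i, a ≤ i → i ≤ a + s → f i = 0) :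
    dividedDiff y f s a = 0 := by
  induction s generalizing a with
  | zero => exact hf a le_rfl (by omega)
  | succ s ih =>
    rw [dividedDiff, ih fun i h₁ h₂ => hf i (by omega) (by omega),
      ih fun i h₁ h₂ => hf i (by omega) (by omega), sub_self, zero_div]

theorem const_succ (c : ℝ) (s a : ℕ) : dividedDiff y (fun _ => c) (s + 1) a = 0 := by
  induction s generalizing a with
  | zero => simp [dividedDiff]
  | succ s ih => rw [dividedDiff, ih, ih, sub_self, zero_div]

-- Leibniz rule `[y_a, …, y_b](g f) = g(y_a) [y_a, …, y_b] f + [y_{a+1}, …, y_b] f`, `g` linear.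
theorem sub_mul_succ (hy : Set.InjOn y (Set.Iic n)) (u : ℝ) {s a : ℕ} (h : a + s + 1 ≤ n) :
    dividedDiff y (fun i => (y i - u) * f i) (s + 1) a
      = (y a - u) * dividedDiff y f (s + 1) a + dividedDiff y f s (a + 1) := by
  induction s generalizing a with
  | zero =>
    have h₁ : y (a + 0 + 1) - y a ≠ 0 := sub_ne_zero_of_injOn_Iic hy (by omega) h
    simp only [dividedDiff]
    field_simp
    ring
  | succ s ih =>
    have h₁ : y (a + (s + 1) + 1) - y a ≠ 0 := sub_ne_zero_of_injOn_Iic hy (by omega) h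
    have h₂ : y (a + (s + 1) + 1) - y (a + 1) ≠ 0 := sub_ne_zero_of_injOn_Iic hy (by omega) h
    rw [dividedDiff, ih (by omega), ih (by omega)]
    simp only [dividedDiff]
    rw [show a + 1 + s + 1 = a + (s + 1) + 1 by omega]
    field_simp
    ring

end dividedDiff

noncomputable def newtonBasis (y : ℕ → ℝ) (j : ℕ) (z : ℝ) : ℝ := ∏ k ∈ range j, (z - y k)

namespace newtonBasis

variable {y : ℕ → ℝ} {n : ℕ}

theorem succ (j : ℕ) (z : ℝ) : newtonBasis y (j + 1) z = (z - y j) * newtonBasis y j z := by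
  rw [newtonBasis, prod_range_succ, mul_comm, newtonBasis]

theorem eq_zero_of_lt {i j : ℕ} (h : i < j) : newtonBasis y j (y i) = 0 :=
  prod_eq_zero (mem_range.2 h) (sub_self _)

theorem dividedDiff_of_lt (hy : Set.InjOn y (Set.Iic n)) {j s : ℕ} (hjs : j < s) {a : ℕ}
    (h : a + s ≤ n) : dividedDiff y (fun i => newtonBasis y j (y i)) s a = 0 := by
  induction j generalizing s a with
  | zero =>
    obtain ⟨s, rfl⟩ := Nat.exists_eq_add_of_lt hjs
    exact dividedDiff.const_succ 1 _ _
  | succ j ih =>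
    obtain ⟨s, rfl⟩ : ∃ s', s = s' + 1 := ⟨s - 1, by omega⟩
    simp only [succ]
    rw [dividedDiff.sub_mul_succ hy _ (by omega), ih (by omega) h, ih (by omega) (by omega)]
    ring

theorem dividedDiff_self (hy : Set.InjOn y (Set.Iic n)) {s a : ℕ} (h : a + s ≤ n) :
    dividedDiff y (fun i => newtonBasis y s (y i)) s a = 1 := by
  induction s generalizing a with
  | zero => simp [dividedDiff, newtonBasis]
  | succ s ih =>
    simp only [succ]
    rw [dividedDiff.sub_mul_succ hy _ (by omega), dividedDiff_of_lt hy (Nat.lt_succ_self s) h,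
      ih (by omega)]
    ring

theorem dividedDiff_of_gt {j s a : ℕ} (h : a + s < j) :
    dividedDiff y (fun i => newtonBasis y j (y i)) s a = 0 :=
  dividedDiff.eq_zero_of_eqOn_zero fun _ _ hi => eq_zero_of_lt (by omega)

theorem dividedDiff_zero_eq_one_apply (hy : Set.InjOn y (Set.Iic n)) (i j : Fin (n + 1)) :
    dividedDiff y (fun k => newtonBasis y j (y k)) i 0 =
      (1 : Matrix (Fin (n + 1)) (Fin (n + 1)) ℝ) i j := by
  rcases lt_trichotomy (i : ℕ) j with h | h | h
  · rw [dividedDiff_of_gt (by omega), Matrix.one_apply_ne (Fin.ne_of_lt h)]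
  · rw [Fin.ext h, Matrix.one_apply_eq, dividedDiff_self hy (by omega)]
  · rw [dividedDiff_of_lt hy h (by omega), Matrix.one_apply_ne (Fin.ne_of_gt h)]

end newtonBasis

-- Stage `c` of Neville elimination, each row scaled so that all multipliers equal `1`.
noncomputable def nevilleMatrix (y : ℕ → ℝ) (F : ℕ → ℕ → ℝ) (m c : ℕ) : Matrix (Fin m) (Fin m) ℝ :=
  Matrix.of fun i j => dividedDiff y (F · j) (min c i) (i - min c i)

section Neville

variable {y : ℕ → ℝ} {n : ℕ}

theorem TotallyPositive.nevilleMatrix_of_succ {F : ℕ → ℕ → ℝ} (hy : StrictMonoOn y (Set.Iic n))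
    {c : ℕ} (h : TotallyPositive (nevilleMatrix y F (n + 1) (c + 1))) :
    TotallyPositive (nevilleMatrix y F (n + 1) c) := by
  refine h.of_rows_accumulate c (d := fun j => y j - y (j - c - 1)) (fun j => ?_) (fun i hi => ?_)
    (fun i j hij hcj => ?_)
  · exact sub_nonneg.2 <|
      hy.monotoneOn (Set.mem_Iic.2 (by omega)) (Set.mem_Iic.2 (by omega)) (by omega)
  · ext j
    simp [nevilleMatrix, min_eq_right hi, min_eq_right (hi.trans c.le_succ)]
  · obtain ⟨a, ha⟩ : ∃ a, (i : ℕ) = a + c := ⟨i - c, by omega⟩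
    have hj : (j : ℕ) = a + c + 1 := by omega
    have hne : y (a + c + 1) - y a ≠ 0 := sub_ne_zero_of_injOn_Iic hy.injOn (by omega) (by omega)
    ext k
    simp only [nevilleMatrix, Matrix.of_apply, Pi.add_apply, Pi.smul_apply, smul_eq_mul, hj, ha]
    rw [min_eq_left (by omega : c ≤ a + c + 1), min_eq_left (by omega : c + 1 ≤ a + c + 1),
      min_eq_left (by omega : c ≤ a + c), show a + c + 1 - c = a + 1 by omega,
      show a + c + 1 - (c + 1) = a by omega, show a + c - c = a by omega, dividedDiff,
      Nat.add_sub_cancel]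
    field_simp
    ring

theorem totallyPositive_of_dividedDiff (F : ℕ → ℕ → ℝ) (hy : StrictMonoOn y (Set.Iic n))
    (h : TotallyPositive (Matrix.of fun i j : Fin (n + 1) => dividedDiff y (F · j) i 0)) :
    TotallyPositive (Matrix.of fun i j : Fin (n + 1) => F i j) := by
  have hfirst : nevilleMatrix y F (n + 1) 0 = Matrix.of fun i j : Fin (n + 1) => F i j := by
    ext i j
    simp [nevilleMatrix, dividedDiff]
  have hlast : nevilleMatrix y F (n + 1) n =
      Matrix.of fun i j : Fin (n + 1) => dividedDiff y (F · j) i 0 := by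
    ext i j
    simp [nevilleMatrix, min_eq_right (Nat.le_of_lt_succ i.is_lt)]
  rw [← hfirst]
  exact Nat.decreasingInduction (motive := fun c _ => TotallyPositive (nevilleMatrix y F (n + 1) c))
    (fun _ _ => TotallyPositive.nevilleMatrix_of_succ hy) (hlast ▸ h) (Nat.zero_le n)

end Neville

section NewtonCollocation

variable {y : ℕ → ℝ} {n : ℕ}

theorem totallyPositive_newtonBasis (hy : StrictMonoOn y (Set.Iic n)) :
    TotallyPositive (Matrix.of fun i j : Fin (n + 1) => newtonBasis y j (y i)) := by
  refine totallyPositive_of_dividedDiff (fun i j => newtonBasis y j (y i)) hy ?_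
  convert TotallyPositive.one using 1
  ext i j
  exact newtonBasis.dividedDiff_zero_eq_one_apply hy.injOn i j

theorem strictMonoOn_of_newtonBasis_nonneg (hy : Set.InjOn y (Set.Iic n))
    (h : ∀ i j, i ≤ n → j ≤ n → 0 ≤ newtonBasis y j (y i)) : StrictMonoOn y (Set.Iic n) := by
  suffices key : ∀ p q, p < q → q ≤ n → y p < y q from
    fun p _ q hq hpq => key p q hpq (Set.mem_Iic.1 hq)
  intro p
  induction p using Nat.strong_induction_on with
  | _ p ih =>
    intro q hpq hq
    have hpos : 0 < newtonBasis y p (y q) :=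
      prod_pos fun k hk => sub_pos.2 (ih k (mem_range.1 hk) q ((mem_range.1 hk).trans hpq) hq)
    have hle : y p ≤ y q := by
      have := h q (p + 1) hq (by omega)
      rw [newtonBasis.succ] at this
      nlinarith
    exact hle.lt_of_ne fun heq => hpq.ne (hy (Set.mem_Iic.2 (by omega)) (Set.mem_Iic.2 hq) heq)

end NewtonCollocation

theorem newton_collocation_times_J_totally_positive_iff_decreasing_general
    (n : ℕ) (t : ℕ → ℝ)
    (ht : ∀ i j, 1 ≤ i → i ≤ n + 1 → 1 ≤ j → j ≤ n + 1 → i ≠ j → t i ≠ t j)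
    (L : Matrix (Fin (n + 1)) (Fin (n + 1)) ℝ)
    (hL : ∀ i j, L i j = ∏ k ∈ Finset.Icc 1 j.val, (t (i.val + 1) - t k))
    (J : Matrix (Fin (n + 1)) (Fin (n + 1)) ℝ)
    (hJ : J = Matrix.diagonal fun i : Fin (n + 1) => (-1 : ℝ) ^ (i : ℕ)) :
    TotallyPositive (L * J) ↔ ∀ i j, 1 ≤ i → i < j → j ≤ n + 1 → t j < t i := by
  set y : ℕ → ℝ := fun i => -t (i + 1)
  have hLJ : L * J = Matrix.of fun i j : Fin (n + 1) => newtonBasis y j (y i) := by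
    ext i j
    have hsign := prod_neg (s := range j) fun k => t (i + 1) - t (k + 1)
    rw [card_range] at hsign
    have hshift :
        ∏ k ∈ Icc 1 (j : ℕ), (t (i + 1) - t k) = ∏ k ∈ range j, (t (i + 1) - t (k + 1)) := by
      rw [range_eq_Ico, prod_Ico_add' (fun k => t (i + 1) - t k), zero_add,
        Ico_add_one_right_eq_Icc]
    rw [hJ, Matrix.mul_diagonal, hL, hshift, mul_comm, ← hsign]
    exact prod_congr rfl fun k _ => by simp only [y]; ring
  have hinj : Set.InjOn y (Set.Iic n) := fun a ha b hb hab => by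
    rw [Set.mem_Iic] at ha hb
    by_contra hne
    exact ht (a + 1) (b + 1) (by omega) (by omega) (by omega) (by omega) (by omega) (neg_inj.1 hab)
  have hdec : (∀ i j, 1 ≤ i → i < j → j ≤ n + 1 → t j < t i) ↔ StrictMonoOn y (Set.Iic n) := by
    refine ⟨fun h a _ b hb hab => neg_lt_neg (h _ _ (by omega) (by omega) (Nat.succ_le_succ hb)),
      fun h i j hi hij hj => ?_⟩
    have := h (a := i - 1) (b := j - 1) (Set.mem_Iic.2 (by omega)) (Set.mem_Iic.2 (by omega))
      (by omega)
    simp only [y, Nat.sub_add_cancel hi, Nat.sub_add_cancel (hi.trans hij.le)] at this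
    exact neg_lt_neg_iff.1 this
  rw [hLJ, hdec]
  exact ⟨fun hTP => strictMonoOn_of_newtonBasis_nonneg hinj fun i j hi hj =>
    hTP.nonneg ⟨i, by omega⟩ ⟨j, by omega⟩, totallyPositive_newtonBasis⟩

/-- with `J = diag(1, −1, 1, …)`, the matrix `L·J` is totally
positive iff the pairwise distinct nodes `t 1, …, t (n+1)` are in strictly
decreasing order, where `L` is the Newton collocation matrix. -/
theorem newton_collocation_times_J_totally_positive_iff_decreasing
    (n : ℕ) (hn : 1 ≤ n) (t : ℕ → ℝ)
    (ht : ∀ i j, 1 ≤ i → i ≤ n + 1 → 1 ≤ j → j ≤ n + 1 → i ≠ j → t i ≠ t j)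
    (L : Matrix (Fin (n + 1)) (Fin (n + 1)) ℝ)
    (hL : ∀ i j, L i j = ∏ k ∈ Finset.Icc 1 j.val, (t (i.val + 1) - t k))
    (J : Matrix (Fin (n + 1)) (Fin (n + 1)) ℝ)
    (hJ : J = Matrix.diagonal fun i : Fin (n + 1) => (-1 : ℝ) ^ (i : ℕ)) :
    TotallyPositive (L * J) ↔ ∀ i j, 1 ≤ i → i < j → j ≤ n + 1 → t j < t i :=
  newton_collocation_times_J_totally_positive_iff_decreasing_general n t ht L hL J hJ
end

section
/- Let n ≥ 1 and let t_1, …, t_{n+1} be pairwise distinct real numbers. Let U be the (n+1)×(n+1) upper triangular matrix with U_{i,j} = [t_1, …, t_i]m_{j−1} for 1 ≤ i ≤ j ≤ n+1, where m_{j−1}(t) = t^{j−1}, and U_{i,j} = 0 for i > j. Then U = G_1 · G_2 · ⋯ · G_n, where for i = 1, …, n, G_i is the (n+1)×(n+1) upper bidiagonal matrix with unit diagonal whose only possibly nonzero off-diagonal entries are (G_i)_{p−1,p} = t_{p−i} for p = i+1, …, n+1. -/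
open Finset

/-- The divided difference `[t_i, …, t_{i+k}]f` of `f` at the (pairwise
distinct) nodes `t i, …, t (i+k)`, defined by the classical recursion. -/
noncomputable def divDiff (t : ℕ → ℝ) (f : ℝ → ℝ) : ℕ → ℕ → ℝ
  | i, 0 => f (t i)
  | i, k + 1 => (divDiff t f (i + 1) k - divDiff t f i k) / (t (i + k + 1) - t i)

/-- `G_i`: upper bidiagonal matrix with unit diagonal whose only possibly
nonzero off-diagonal entries are `(G_i)_{p−1,p} = t_{p−i}` for
`p = i+1, …, n+1` (1-based `p`; matrix entry `(p,q)` has 1-based indices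
`p.val+1`, `q.val+1`). -/
noncomputable def Gmat (n : ℕ) (t : ℕ → ℝ) (i : ℕ) :
    Matrix (Fin (n + 1)) (Fin (n + 1)) ℝ :=
  Matrix.of fun p q =>
    if p.val = q.val then 1
    else if q.val = p.val + 1 ∧ i ≤ q.val then t (q.val + 1 - i)
    else 0

/-- Complete homogeneous symmetric polynomial of degree `k` in the
variables `t a, …, t (a+r-1)`. -/
noncomputable def hh (t : ℕ → ℝ) : ℕ → ℕ → ℕ → ℝ
  | _, _, 0 => 1
  | _, 0, _+1 => 0
  | a, r+1, k+1 => hh t a r (k+1) + t (a + r) * hh t a (r+1) k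

lemma hh_zero (t : ℕ → ℝ) (a r : ℕ) : hh t a r 0 = 1 := by cases r <;> simp [hh]

lemma hh_nil (t : ℕ → ℝ) (a k : ℕ) : hh t a 0 (k+1) = 0 := by simp [hh]

lemma hh_last (t : ℕ → ℝ) (a r k : ℕ) :
    hh t a (r+1) (k+1) = hh t a r (k+1) + t (a + r) * hh t a (r+1) k := by
  rw [hh]

lemma hh_one (t : ℕ → ℝ) (a : ℕ) : ∀ k, hh t a 1 k = t a ^ k := by
  intro k
  induction k with
  | zero => simp [hh_zero]
  | succ k ih => rw [hh_last, hh_nil, ih]; ring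

lemma hh_first (t : ℕ → ℝ) : ∀ k r a,
    hh t a (r+1) (k+1) = hh t (a+1) r (k+1) + t a * hh t a (r+1) k := by
  intro k
  induction k with
  | zero =>
    intro r
    induction r with
    | zero => intro a; simp [hh_one, hh_nil, hh_zero, pow_succ]
    | succ r ihr =>
      intro a
      have e1 := hh_last t a (r+1) 0
      have e2 := ihr a
      have e4 := hh_last t (a+1) r 0
      rw [show a + (r+1) = (a+1) + r from by omega] at e1
      simp only [hh_zero, mul_one] at e1 e2 e4 ⊢
      linear_combination e1 + e2 - e4
  | succ k ihk =>
    intro r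
    induction r with
    | zero =>
      intro a
      rw [hh_last, hh_nil, hh_nil]
      simp
    | succ r ihr =>
      intro a
      have e1 := hh_last t a (r+1) (k+1)
      have e2 := ihr a
      have e3 := ihk (r+1) a
      have e4 := hh_last t (a+1) r (k+1)
      have e5 := hh_last t a (r+1) k
      rw [show a + (r+1) = (a+1) + r from by omega] at e1 e5
      linear_combination e1 + e2 + t ((a+1)+r) * e3 - e4 - t a * e5

lemma divDiff_pow (n : ℕ) (t : ℕ → ℝ)
    (hd : ∀ b c : ℕ, 1 ≤ b → b < c → c ≤ n+1 → t b ≠ t c) :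
    ∀ i a j, i ≤ j → 1 ≤ a → a + i ≤ n + 1 →
      divDiff t (fun s => s ^ j) a i = hh t a (i+1) (j - i) := by
  intro i
  induction i with
  | zero =>
    intro a j _ _ _
    show (fun s => s ^ j) (t a) = _
    simp [hh_one]
  | succ i ih =>
    intro a j hij ha hai
    rw [divDiff, ih (a+1) j (by omega) (by omega) (by omega),
      ih a j (by omega) (by omega) (by omega)]
    set k := j - (i+1) with hk
    have hji : j - i = k + 1 := by omega
    rw [hji]
    have e1 := hh_last t a (i+1) k
    have e2 := hh_first t k (i+1) a
    have hne : t (a + i + 1) - t a ≠ 0 :=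
      sub_ne_zero.mpr (Ne.symm (hd a (a+i+1) ha (by omega) (by omega)))
    rw [show a + (i+1) = a + i + 1 from by omega] at e1
    field_simp
    linear_combination e1 - e2

lemma mul_G (n : ℕ) (t : ℕ → ℝ) (A : Matrix (Fin (n+1)) (Fin (n+1)) ℝ)
    (i : ℕ) (hi : 1 ≤ i) (p q : Fin (n+1)) :
    (A * Gmat n t i) p q = A p q +
      (if i ≤ q.val then t (q.val + 1 - i) * A p ⟨q.val - 1, by omega⟩ else 0) := by
  rw [Matrix.mul_apply]
  by_cases hiq : i ≤ q.val
  · set qp : Fin (n+1) := ⟨q.val - 1, by omega⟩ with hqp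
    have key : ∀ r : Fin (n+1), A p r * Gmat n t i r q =
        (if q = r then A p q else 0) + (if qp = r then t (q.val + 1 - i) * A p qp else 0) := by
      intro r
      simp only [Gmat, Matrix.of_apply]
      rcases eq_or_ne r q with h | h
      · subst h
        have h1 : ¬ qp = r := by
          intro h; apply_fun Fin.val at h; simp [hqp] at h; omega
        simp [h1]
      · have h2 : ¬ r.val = q.val := fun hv => h (Fin.ext hv)
        have h3 : ¬ q = r := fun hv => h hv.symm
        simp only [h2, h3, if_false, if_neg h3, zero_add]
        by_cases h4 : q.val = r.val + 1
        · have h5 : qp = r := by apply Fin.ext; simp [hqp]; omega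
          have h6 : i ≤ r.val + 1 := by omega
          simp [h4, h6, h5, mul_comm]
        · have h5 : ¬ qp = r := by
            intro h; apply_fun Fin.val at h; simp [hqp] at h; omega
          simp [h4, h5]
    rw [Finset.sum_congr rfl (fun r _ => key r), Finset.sum_add_distrib]
    simp [hiq]
  · have key : ∀ r : Fin (n+1), A p r * Gmat n t i r q =
        (if q = r then A p q else 0) := by
      intro r
      simp only [Gmat, Matrix.of_apply]
      rcases eq_or_ne r q with h | h
      · subst h; simp
      · have h2 : ¬ r.val = q.val := fun hv => h (Fin.ext hv)
        have h3 : ¬ q = r := fun hv => h hv.symm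
        simp [h2, h3, hiq]
    rw [Finset.sum_congr rfl (fun r _ => key r)]
    simp [hiq]

/-- Entrywise formula for the partial products `G_1 ⋯ G_m`. -/
lemma prod_G_apply (n : ℕ) (t : ℕ → ℝ) (m : ℕ) (p q : Fin (n+1)) :
    (((List.range m).map (fun k => Gmat n t (k+1))).prod) p q =
      if p.val ≤ q.val then
        hh t (max 1 (q.val+1-m)) (p.val+2 - max 1 (q.val+1-m)) (q.val - p.val)
      else 0 := by
  induction m generalizing p q with
  | zero =>
    simp only [List.range_zero, List.map_nil, List.prod_nil]
    rcases le_or_gt p.val q.val with h | h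
    · rw [if_pos h]
      rcases eq_or_lt_of_le h with h1 | h1
      · have hpq' : p = q := Fin.ext h1
        subst hpq'
        rw [Matrix.one_apply_eq,
            show max 1 (p.val+1-0) = p.val + 1 from by omega,
            show p.val + 2 - (p.val+1) = 1 from by omega,
            show p.val - p.val = 0 from by omega, hh_zero]
      · rw [Matrix.one_apply_ne (by intro hc; rw [hc] at h1; omega),
          show max 1 (q.val+1-0) = q.val + 1 from by omega,
          show p.val + 2 - (q.val+1) = 0 from by omega,
          show q.val - p.val = (q.val - p.val - 1) + 1 from by omega, hh_nil]
    · rw [if_neg (by omega), Matrix.one_apply_ne (by intro hc; rw [hc] at h; omega)]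
  | succ m ih =>
    rw [List.range_succ, List.map_append, List.prod_append, List.map_cons,
      List.map_nil, List.prod_cons, List.prod_nil, mul_one, mul_G n t _ (m+1) (by omega),
      ih, ih]
    rcases le_or_gt p.val q.val with hpq | hpq
    · rw [if_pos hpq, if_pos hpq]
      by_cases hmq : m + 1 ≤ q.val
      · rw [if_pos hmq]
        have hq1 : (⟨q.val - 1, by omega⟩ : Fin (n+1)).val = q.val - 1 := rfl
        rcases eq_or_lt_of_le hpq with he | hlt
        · rw [if_neg (by rw [hq1]; omega), mul_zero, add_zero]
          rw [show max 1 (q.val+1-m) = q.val+1-m from by omega,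
            show max 1 (q.val+1-(m+1)) = q.val-m from by omega,
            show q.val - p.val = 0 from by omega, hh_zero, hh_zero]
        · rw [if_pos (by rw [hq1]; omega), hq1]
          rw [show max 1 (q.val+1-m) = (q.val-m)+1 from by omega,
            show max 1 (q.val-1+1-m) = q.val-m from by omega,
            show max 1 (q.val+1-(m+1)) = q.val-m from by omega,
            show q.val + 1 - (m+1) = q.val - m from by omega]
          rcases le_or_gt (q.val-m) (p.val+1) with hr | hr
          · rw [show p.val + 2 - (q.val-m) = (p.val+1-(q.val-m)) + 1 from by omega,
              show p.val + 2 - ((q.val-m)+1) = p.val+1-(q.val-m) from by omega,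
              show q.val - p.val = (q.val - p.val - 1)+1 from by omega,
              show q.val - 1 - p.val = q.val - p.val - 1 from by omega]
            exact (hh_first t (q.val-p.val-1) (p.val+1-(q.val-m)) (q.val-m)).symm
          · rw [show p.val + 2 - (q.val-m) = 0 from by omega,
              show p.val + 2 - ((q.val-m)+1) = 0 from by omega,
              show q.val - p.val = (q.val - p.val - 1)+1 from by omega,
              show q.val - 1 - p.val = q.val - p.val - 1 from by omega]
            rw [hh_nil, hh_nil]
            rw [show q.val - p.val - 1 = (q.val-p.val-2)+1 from by omega, hh_nil]
            ring
      · rw [if_neg hmq, add_zero,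
          show max 1 (q.val+1-(m+1)) = 1 from by omega,
          show max 1 (q.val+1-m) = 1 from by omega]
    · have h1 : ¬ (p.val ≤ q.val) := by omega
      have h2 : ¬ (p.val ≤ (⟨q.val - 1, by omega⟩ : Fin (n+1)).val) := by
        show ¬ (p.val ≤ q.val - 1); omega
      simp [h1, h2]

/-- the upper triangular matrix of divided differences of
monomials, `U_{i,j} = [t_1, …, t_i] m_{j−1}` with `m_{j−1}(s) = s^{j−1}`,
factorizes as `U = G_1 · G_2 ⋯ G_n`. -/
theorem monomial_divided_difference_matrix_bidiagonal_factorization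
    (n : ℕ) (hn : 1 ≤ n) (t : ℕ → ℝ)
    (ht : ∀ i j, 1 ≤ i → i ≤ n + 1 → 1 ≤ j → j ≤ n + 1 → i ≠ j → t i ≠ t j)
    (U : Matrix (Fin (n + 1)) (Fin (n + 1)) ℝ)
    (hU : ∀ i j, U i j =
      if i.val ≤ j.val then divDiff t (fun s => s ^ j.val) 1 i.val else 0) :
    U = ((List.range n).map (fun k => Gmat n t (k + 1))).prod := by
  have hd : ∀ b c : ℕ, 1 ≤ b → b < c → c ≤ n+1 → t b ≠ t c := fun b c hb hbc hc =>
    ht b c hb (by omega) (by omega) hc (by omega)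
  ext p q
  rw [hU p q, prod_G_apply]
  rcases le_or_gt p.val q.val with h | h
  · rw [if_pos h, if_pos h,
      divDiff_pow n t hd p.val 1 q.val h (le_refl 1) (by omega),
      show max 1 (q.val+1-n) = 1 from by omega,
      show p.val + 2 - 1 = p.val + 1 from by omega]
  · rw [if_neg (by omega), if_neg (by omega)]
end

section
/- Let n ≥ 2, let t_1 < t_2 < ⋯ < t_{n+1} be real numbers, and set rel_gap := min_{i≠j} |t_i − t_j|/(|t_i| + |t_j|) and κ := 1/rel_gap. Let θ ≥ 0 satisfy (2n−2)·κ·θ < 1, and let t'_i = t_i(1 + δ_i) with |δ_i| ≤ θ for i = 1, …, n+1. Then the t'_i are pairwise distinct, and with β := (2n−2)κθ/(1 − (2n−2)κθ): for all 1 ≤ j < i ≤ n+1 the quantities m_{i,j} := ∏_{k=1}^{j−1} (t_i − t_{i−k})/(t_{i−1} − t_{i−k−1}) and m'_{i,j} := ∏_{k=1}^{j−1} (t'_i − t'_{i−k})/(t'_{i−1} − t'_{i−k−1}) satisfy |m'_{i,j} − m_{i,j}| ≤ β·|m_{i,j}|, and for all 1 ≤ i ≤ n+1 the quantities p_i :=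 ∏_{k=1}^{i−1}(t_i − t_k) and p'_i := ∏_{k=1}^{i−1}(t'_i − t'_k) satisfy |p'_i − p_i| ≤ β·|p_i|. -/
/-!
Each difference `t' a - t' b = (t a - t b) + (t a δ a - t b δ b)` differs from `t a - t b` by at
most `κθ |t a - t b|`, since `|t a| + |t b| ≤ κ |t a - t b|` by definition of the relative gap.
Hence its ratio to `t a - t b` lies in `[1 - κθ, (1 - κθ)⁻¹]`. The quantity `p'_i / p_i` is a
product of at most `n` such ratios and `m'_{i,j} / m_{i,j}` a product of at most `n - 1` ratios
and `n - 1` inverse ratios, so both lie in `[(1 - κθ)^N, (1 - κθ)^(-N)]` with `N ≤ 2n - 2`, and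
Bernoulli's inequality `(1 - κθ)^N ≥ 1 - Nκθ` bounds the relative error by `β`.
-/

open Finset

def RatioWithin (ρ a' a : ℝ) : Prop :=
  a ≠ 0 ∧ a' / a ∈ Set.Icc ρ ρ⁻¹

namespace RatioWithin

variable {ρ σ a a' b b' : ℝ}

lemma ne_zero_left (hρ : 0 < ρ) (h : RatioWithin ρ a' a) : a' ≠ 0 := by
  rintro rfl
  have := h.2.1
  rw [zero_div] at this
  linarith

lemma inv (hρ : 0 < ρ) (h : RatioWithin ρ a' a) : RatioWithin ρ a'⁻¹ a⁻¹ := by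
  obtain ⟨ha, hlo, hhi⟩ := h
  have hr : 0 < a' / a := hρ.trans_le hlo
  refine ⟨inv_ne_zero ha, ?_, ?_⟩ <;> rw [inv_div_inv, ← inv_div]
  · simpa using inv_anti₀ hr hhi
  · exact inv_anti₀ hρ hlo

lemma mul (hρ : 0 ≤ ρ) (hσ : 0 ≤ σ) (ha : RatioWithin ρ a' a) (hb : RatioWithin σ b' b) :
    RatioWithin (ρ * σ) (a' * b') (a * b) := by
  obtain ⟨ha0, halo, hahi⟩ := ha
  obtain ⟨hb0, hblo, hbhi⟩ := hb
  refine ⟨mul_ne_zero ha0 hb0, ?_, ?_⟩ <;> rw [mul_div_mul_comm]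
  · exact mul_le_mul halo hblo hσ (hρ.trans halo)
  · rw [mul_inv]
    exact mul_le_mul hahi hbhi (hσ.trans hblo) (inv_nonneg.mpr hρ)

lemma div (hρ : 0 ≤ ρ) (hσ : 0 < σ) (ha : RatioWithin ρ a' a) (hb : RatioWithin σ b' b) :
    RatioWithin (ρ * σ) (a' / b') (a / b) := by
  simpa only [div_eq_mul_inv] using mul hρ hσ.le ha (hb.inv hσ)

lemma prod {ι : Type*} {s : Finset ι} {f f' : ι → ℝ} (hρ : 0 ≤ ρ)
    (h : ∀ k ∈ s, RatioWithin ρ (f' k) (f k)) :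
    RatioWithin (ρ ^ #s) (∏ k ∈ s, f' k) (∏ k ∈ s, f k) := by
  classical
  induction s using Finset.induction_on with
  | empty => simp [RatioWithin]
  | insert k s hk ih =>
    rw [prod_insert hk, prod_insert hk, card_insert_of_notMem hk, pow_succ']
    exact (h k (mem_insert_self k s)).mul hρ (pow_nonneg hρ _)
      (ih fun l hl => h l (mem_insert_of_mem hl))

lemma abs_sub_le (hρ : 0 < ρ) (h : RatioWithin ρ a' a) : |a' - a| ≤ (ρ⁻¹ - 1) * |a| := by
  obtain ⟨ha, hlo, hhi⟩ := h
  -- `ρ + ρ⁻¹ ≥ 2`, so the lower end of the interval is the closer one to `1`.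
  have hamgm : 1 - ρ ≤ ρ⁻¹ - 1 := by
    have : ρ * ρ⁻¹ = 1 := mul_inv_cancel₀ hρ.ne'
    nlinarith [sq_nonneg (ρ - 1), inv_pos.mpr hρ]
  calc |a' - a| = |a' / a - 1| * |a| := by
        rw [← abs_mul, sub_mul, div_mul_cancel₀ _ ha, one_mul]
    _ ≤ (ρ⁻¹ - 1) * |a| := by
        gcongr
        exact abs_le.mpr ⟨by linarith, by linarith⟩

end RatioWithin

lemma ratioWithin_one_sub_of_abs_sub_le {u a a' : ℝ} (hu : u < 1) (ha : a ≠ 0)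
    (h : |a' - a| ≤ u * |a|) : RatioWithin (1 - u) a' a := by
  have h' : |a' / a - 1| ≤ u := by
    rwa [div_sub_one ha, abs_div, div_le_iff₀ (abs_pos.mpr ha)]
  obtain ⟨hlo, hhi⟩ := abs_le.mp h'
  have hinv : 1 + u ≤ (1 - u)⁻¹ := by
    rw [← one_div, le_div_iff₀ (by linarith)]
    nlinarith [sq_nonneg u]
  exact ⟨ha, by linarith, by linarith⟩

lemma inv_one_sub_pow_sub_one_le {u M : ℝ} {m : ℕ} (hu₀ : 0 ≤ u) (hu₁ : u < 1)
    (hm : (m : ℝ) ≤ M) (hM : M * u < 1) :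
    ((1 - u) ^ m)⁻¹ - 1 ≤ M * u / (1 - M * u) := by
  have hbernoulli : 1 - M * u ≤ (1 - u) ^ m :=
    calc 1 - M * u ≤ 1 + m * -u := by nlinarith
      _ ≤ (1 + -u) ^ m := one_add_mul_le_pow (by linarith) m
      _ = (1 - u) ^ m := by ring
  have hpos : 0 < 1 - M * u := by linarith
  calc ((1 - u) ^ m)⁻¹ - 1 ≤ (1 - M * u)⁻¹ - 1 := by gcongr
    _ = M * u / (1 - M * u) := by field_simp; ring

lemma RatioWithin.abs_sub_le_of_one_sub_pow {u M a a' : ℝ} {m : ℕ}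
    (h : RatioWithin ((1 - u) ^ m) a' a) (hu₀ : 0 ≤ u) (hu₁ : u < 1) (hm : (m : ℝ) ≤ M)
    (hM : M * u < 1) : |a' - a| ≤ M * u / (1 - M * u) * |a| :=
  (h.abs_sub_le (pow_pos (by linarith) m)).trans <| by
    gcongr
    exact inv_one_sub_pow_sub_one_le hu₀ hu₁ hm hM

lemma abs_perturbed_sub_sub_le {x y δx δy θ g : ℝ} (hg : 0 < g)
    (hgap : g * (|x| + |y|) ≤ |x - y|) (hδx : |δx| ≤ θ) (hδy : |δy| ≤ θ) :
    |x * (1 + δx) - y * (1 + δy) - (x - y)| ≤ g⁻¹ * θ * |x - y| := by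
  have hθ : 0 ≤ θ := (abs_nonneg _).trans hδx
  calc |x * (1 + δx) - y * (1 + δy) - (x - y)| = |x * δx - y * δy| := by ring_nf
    _ ≤ |x| * |δx| + |y| * |δy| := by rw [← abs_mul, ← abs_mul]; exact abs_sub _ _
    _ ≤ θ * (|x| + |y|) := by nlinarith [abs_nonneg x, abs_nonneg y]
    _ ≤ θ * (g⁻¹ * |x - y|) := by gcongr; exact (le_inv_mul_iff₀ hg).mpr hgap
    _ = g⁻¹ * θ * |x - y| := by ring

section Nodes

variable {I : Finset ℕ} {t t' δ : ℕ → ℝ} {g θ : ℝ}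

lemma pos_and_gap_of_isLeast (hinj : ∀ a ∈ I, ∀ b ∈ I, a ≠ b → t a ≠ t b)
    (hg : IsLeast {x : ℝ | ∃ i ∈ I, ∃ j ∈ I, i ≠ j ∧ x = |t i - t j| / (|t i| + |t j|)} g) :
    0 < g ∧ ∀ a ∈ I, ∀ b ∈ I, a ≠ b → g * (|t a| + |t b|) ≤ |t a - t b| := by
  have hpos : ∀ a ∈ I, ∀ b ∈ I, a ≠ b → 0 < |t a - t b| ∧ 0 < |t a| + |t b| := by
    intro a ha b hb hab
    have hdiff : 0 < |t a - t b| := abs_pos.mpr (sub_ne_zero.mpr (hinj a ha b hb hab))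
    exact ⟨hdiff, hdiff.trans_le (abs_sub _ _)⟩
  constructor
  · obtain ⟨a, ha, b, hb, hab, rfl⟩ := hg.1
    exact div_pos (hpos a ha b hb hab).1 (hpos a ha b hb hab).2
  · intro a ha b hb hab
    exact (le_div_iff₀ (hpos a ha b hb hab).2).mp (hg.2 ⟨a, ha, b, hb, hab, rfl⟩)

lemma ratioWithin_perturbed_sub (hg : 0 < g)
    (hgap : ∀ a ∈ I, ∀ b ∈ I, a ≠ b → g * (|t a| + |t b|) ≤ |t a - t b|)
    (hinj : ∀ a ∈ I, ∀ b ∈ I, a ≠ b → t a ≠ t b) (hδ : ∀ a ∈ I, |δ a| ≤ θ)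
    (ht' : ∀ a ∈ I, t' a = t a * (1 + δ a)) (hu : g⁻¹ * θ < 1) {a b : ℕ} (ha : a ∈ I)
    (hb : b ∈ I) (hab : a ≠ b) : RatioWithin (1 - g⁻¹ * θ) (t' a - t' b) (t a - t b) := by
  refine ratioWithin_one_sub_of_abs_sub_le hu (sub_ne_zero.mpr (hinj a ha b hb hab)) ?_
  rw [ht' a ha, ht' b hb]
  exact abs_perturbed_sub_sub_le hg (hgap a ha b hb hab) (hδ a ha) (hδ b hb)

end Nodes

section Newton

variable {n : ℕ} {t t' : ℕ → ℝ} {ρ : ℝ}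

lemma ratioWithin_newton_pivot (hρ : 0 ≤ ρ)
    (hpair : ∀ a ∈ Icc 1 (n + 1), ∀ b ∈ Icc 1 (n + 1), a ≠ b →
      RatioWithin ρ (t' a - t' b) (t a - t b))
    {i : ℕ} (hi : i ≤ n + 1) :
    RatioWithin (ρ ^ (i - 1)) (∏ k ∈ Icc 1 (i - 1), (t' i - t' k))
      (∏ k ∈ Icc 1 (i - 1), (t i - t k)) := by
  have h := RatioWithin.prod hρ fun k (hk : k ∈ Icc 1 (i - 1)) => by
    rw [mem_Icc] at hk
    exact hpair i (mem_Icc.mpr ⟨by omega, hi⟩) k (mem_Icc.mpr ⟨hk.1, by omega⟩) (by omega)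
  rwa [Nat.card_Icc, Nat.add_sub_cancel] at h

lemma ratioWithin_newton_multiplier (hρ : 0 < ρ)
    (hpair : ∀ a ∈ Icc 1 (n + 1), ∀ b ∈ Icc 1 (n + 1), a ≠ b →
      RatioWithin ρ (t' a - t' b) (t a - t b))
    {i j : ℕ} (hji : j < i) (hi : i ≤ n + 1) :
    RatioWithin ((ρ * ρ) ^ (j - 1))
      (∏ k ∈ Icc 1 (j - 1), (t' i - t' (i - k)) / (t' (i - 1) - t' (i - k - 1)))
      (∏ k ∈ Icc 1 (j - 1), (t i - t (i - k)) / (t (i - 1) - t (i - k - 1))) := by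
  have h := RatioWithin.prod (mul_pos hρ hρ).le fun k (hk : k ∈ Icc 1 (j - 1)) => by
    rw [mem_Icc] at hk
    exact RatioWithin.div hρ.le hρ
      (hpair i (mem_Icc.mpr ⟨by omega, hi⟩) (i - k) (mem_Icc.mpr ⟨by omega, by omega⟩) (by omega))
      (hpair (i - 1) (mem_Icc.mpr ⟨by omega, by omega⟩) (i - k - 1)
        (mem_Icc.mpr ⟨by omega, by omega⟩) (by omega))
  rwa [Nat.card_Icc, Nat.add_sub_cancel] at h

end Newton

/-- perturbation bound for the bidiagonal decomposition of the
Newton collocation matrix. `relgap` is the minimum of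
`|t i − t j|/(|t i| + |t j|)` over `i ≠ j` (expressed via `IsLeast`), and
`β = (2n−2)·κ·θ/(1 − (2n−2)·κ·θ)` with `κ = relgap⁻¹`. (1-based node
indexing: nodes `t 1, …, t (n+1)`.) -/
theorem newton_bidiagonal_decomposition_perturbation
    (n : ℕ) (hn : 2 ≤ n) (t : ℕ → ℝ)
    (ht : ∀ i j, 1 ≤ i → i < j → j ≤ n + 1 → t i < t j)
    (relgap : ℝ)
    (hrg : IsLeast {x : ℝ | ∃ i ∈ Finset.Icc 1 (n + 1), ∃ j ∈ Finset.Icc 1 (n + 1),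
      i ≠ j ∧ x = |t i - t j| / (|t i| + |t j|)} relgap)
    (θ : ℝ) (hθ : 0 ≤ θ)
    (hsmall : (2 * (n : ℝ) - 2) * relgap⁻¹ * θ < 1)
    (δ : ℕ → ℝ) (hδ : ∀ i, 1 ≤ i → i ≤ n + 1 → |δ i| ≤ θ)
    (t' : ℕ → ℝ) (ht' : ∀ i, 1 ≤ i → i ≤ n + 1 → t' i = t i * (1 + δ i)) :
    (∀ i j, 1 ≤ i → i ≤ n + 1 → 1 ≤ j → j ≤ n + 1 → i ≠ j → t' i ≠ t' j) ∧
    (∀ i j, 1 ≤ j → j < i → i ≤ n + 1 →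
      |(∏ k ∈ Finset.Icc 1 (j - 1), (t' i - t' (i - k)) / (t' (i - 1) - t' (i - k - 1))) -
        ∏ k ∈ Finset.Icc 1 (j - 1), (t i - t (i - k)) / (t (i - 1) - t (i - k - 1))| ≤
      (2 * (n : ℝ) - 2) * relgap⁻¹ * θ / (1 - (2 * (n : ℝ) - 2) * relgap⁻¹ * θ) *
        |∏ k ∈ Finset.Icc 1 (j - 1), (t i - t (i - k)) / (t (i - 1) - t (i - k - 1))|) ∧
    (∀ i, 1 ≤ i → i ≤ n + 1 →
      |(∏ k ∈ Finset.Icc 1 (i - 1), (t' i - t' k)) -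
        ∏ k ∈ Finset.Icc 1 (i - 1), (t i - t k)| ≤
      (2 * (n : ℝ) - 2) * relgap⁻¹ * θ / (1 - (2 * (n : ℝ) - 2) * relgap⁻¹ * θ) *
        |∏ k ∈ Finset.Icc 1 (i - 1), (t i - t k)|) := by
  have hmono : StrictMonoOn t (Set.Icc 1 (n + 1)) := fun a ha b hb hab => ht a b ha.1 hab hb.2
  have hinj : ∀ a ∈ Icc 1 (n + 1), ∀ b ∈ Icc 1 (n + 1), a ≠ b → t a ≠ t b :=
    fun a ha b hb hab => hab ∘ hmono.injOn (by simpa using ha) (by simpa using hb)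
  obtain ⟨hg, hgap⟩ := pos_and_gap_of_isLeast hinj hrg
  have hn' : (2 : ℝ) ≤ n := by exact_mod_cast hn
  have hu₀ : 0 ≤ relgap⁻¹ * θ := mul_nonneg (inv_nonneg.mpr hg.le) hθ
  have hM : (2 * (n : ℝ) - 2) * (relgap⁻¹ * θ) < 1 := by rwa [← mul_assoc]
  have hu₁ : relgap⁻¹ * θ < 1 := by nlinarith
  have hpair : ∀ a ∈ Icc 1 (n + 1), ∀ b ∈ Icc 1 (n + 1), a ≠ b →
      RatioWithin (1 - relgap⁻¹ * θ) (t' a - t' b) (t a - t b) :=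
    fun a ha b hb hab => ratioWithin_perturbed_sub hg hgap hinj
      (fun i hi => hδ i (mem_Icc.mp hi).1 (mem_Icc.mp hi).2)
      (fun i hi => ht' i (mem_Icc.mp hi).1 (mem_Icc.mp hi).2) hu₁ ha hb hab
  have hρ : 0 < 1 - relgap⁻¹ * θ := by linarith
  have hbound : ∀ {m : ℕ} {a a' : ℝ}, m + 2 ≤ 2 * n →
      RatioWithin ((1 - relgap⁻¹ * θ) ^ m) a' a →
      |a' - a| ≤ (2 * (n : ℝ) - 2) * relgap⁻¹ * θ /
        (1 - (2 * (n : ℝ) - 2) * relgap⁻¹ * θ) * |a| := by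
    intro m a a' hm h
    simp only [mul_assoc (2 * (n : ℝ) - 2)]
    refine h.abs_sub_le_of_one_sub_pow hu₀ hu₁ ?_ hM
    rw [le_sub_iff_add_le]
    exact_mod_cast hm
  refine ⟨fun i j hi hi' hj hj' hij => sub_ne_zero.mp ?_, fun i j _ hji hi => ?_,
    fun i _ hi => hbound (by omega) (ratioWithin_newton_pivot hρ.le hpair hi)⟩
  · exact (hpair i (mem_Icc.mpr ⟨hi, hi'⟩) j (mem_Icc.mpr ⟨hj, hj'⟩) hij).ne_zero_left hρ
  · refine hbound (m := 2 * (j - 1)) (by omega) ?_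
    rw [pow_mul, sq]
    exact ratioWithin_newton_multiplier hρ hpair hji hi
end

section
/- Let t_1, …, t_{n+1} be pairwise distinct real numbers, set rel_gap := min_{i≠j} |t_i − t_j|/(|t_i| + |t_j|) and κ := 1/rel_gap, and let θ ≥ 0 and t'_i = t_i(1 + δ_i) with |δ_i| ≤ θ for i = 1, …, n+1. Fix i with 1 ≤ i ≤ n+1 and suppose (i−1)·κ·θ < 1. Then the diagonal entries p_i := ∏_{k=1}^{i−1}(t_i − t_k) and p'_i := ∏_{k=1}^{i−1}(t'_i − t'_k) of the bidiagonal decompositions satisfy |p'_i − p_i| ≤ ((i−1)κθ/(1 − (i−1)κθ))·|p_i| (empty products equal 1). -/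
/-!
Each factor `t'ᵢ - t'ₖ` differs from `tᵢ - tₖ` by `tᵢδᵢ - tₖδₖ`, of size at most
`θ(|tᵢ| + |tₖ|) ≤ κθ|tᵢ - tₖ|` by definition of the relative gap. A product of `m` factors, each
perturbed by relative error at most `x`, has relative error at most `(1 + x)^m - 1`, and
`(1 + x)^m ≤ exp(mx) ≤ 1/(1 - mx)` when `mx < 1`.
-/

open Finset

theorem Finset.norm_prod_sub_prod_le {ι R : Type*} [NormedCommRing R] [NormMulClass R]
    (s : Finset ι) {a b : ι → R} {x : ℝ} (hx : 0 ≤ x)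
    (h : ∀ k ∈ s, ‖b k - a k‖ ≤ x * ‖a k‖) :
    ‖∏ k ∈ s, b k - ∏ k ∈ s, a k‖ ≤ ((1 + x) ^ s.card - 1) * ‖∏ k ∈ s, a k‖ := by
  classical
  induction s using Finset.induction_on with
  | empty => simp
  | insert j s hj ih =>
    rw [prod_insert hj, prod_insert hj, card_insert_of_notMem hj, norm_mul, pow_succ]
    have hj_le := h j (mem_insert_self j s)
    have hs_le := ih fun k hk => h k (mem_insert_of_mem hk)
    have hbj : ‖b j‖ ≤ (1 + x) * ‖a j‖ := by
      linarith [norm_le_norm_add_norm_sub' (b j) (a j)]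
    have hpow : 1 ≤ (1 + x) ^ s.card := one_le_pow₀ (by linarith)
    calc ‖b j * ∏ k ∈ s, b k - a j * ∏ k ∈ s, a k‖
        = ‖b j * (∏ k ∈ s, b k - ∏ k ∈ s, a k) + (b j - a j) * ∏ k ∈ s, a k‖ := by
          congr 1; ring
      _ ≤ ‖b j‖ * ‖∏ k ∈ s, b k - ∏ k ∈ s, a k‖ + ‖b j - a j‖ * ‖∏ k ∈ s, a k‖ := by
          grw [norm_add_le, norm_mul, norm_mul]
      _ ≤ (1 + x) * ‖a j‖ * (((1 + x) ^ s.card - 1) * ‖∏ k ∈ s, a k‖)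
          + x * ‖a j‖ * ‖∏ k ∈ s, a k‖ := by
          gcongr
      _ = ((1 + x) ^ s.card * (1 + x) - 1) * (‖a j‖ * ‖∏ k ∈ s, a k‖) := by ring

theorem one_sub_mul_mul_one_add_pow_le_one {x : ℝ} (hx : -1 ≤ x) (m : ℕ) :
    (1 - m * x) * (1 + x) ^ m ≤ 1 := by
  have hpow : (1 + x) ^ m ≤ Real.exp (m * x) := by
    rw [Real.exp_nat_mul]
    exact pow_le_pow_left₀ (by linarith) (by linarith [Real.add_one_le_exp x]) m
  calc (1 - m * x) * (1 + x) ^ m ≤ Real.exp (-(m * x)) * Real.exp (m * x) := by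
        gcongr
        · exact pow_nonneg (by linarith) m
        · exact Real.one_sub_le_exp_neg _
    _ = 1 := by rw [← Real.exp_add, neg_add_cancel, Real.exp_zero]

theorem one_add_pow_sub_one_le {x : ℝ} (hx : -1 ≤ x) {m : ℕ} (hmx : m * x < 1) :
    (1 + x) ^ m - 1 ≤ m * x / (1 - m * x) := by
  rw [le_div_iff₀ (by linarith)]
  nlinarith [one_sub_mul_mul_one_add_pow_le_one hx m]

theorem abs_sub_div_abs_add_abs_pos {a b : ℝ} (hab : a ≠ b) : 0 < |a - b| / (|a| + |b|) :=
  have hpos : 0 < |a - b| := abs_pos.2 (sub_ne_zero.2 hab)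
  div_pos hpos (hpos.trans_le (abs_sub a b))

theorem abs_add_abs_le_inv_mul_abs_sub {a b g : ℝ} (hg : 0 < g) (hab : a ≠ b)
    (h : g ≤ |a - b| / (|a| + |b|)) : |a| + |b| ≤ g⁻¹ * |a - b| := by
  have hden : 0 < |a| + |b| := (abs_pos.2 (sub_ne_zero.2 hab)).trans_le (abs_sub a b)
  rw [le_div_iff₀ hden] at h
  rw [inv_mul_eq_div, le_div_iff₀ hg]
  linarith

theorem abs_mul_one_add_sub_mul_one_add_sub_le {a b δa δb θ : ℝ} (ha : |δa| ≤ θ) (hb : |δb| ≤ θ) :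
    |(a * (1 + δa) - b * (1 + δb)) - (a - b)| ≤ θ * (|a| + |b|) :=
  calc |(a * (1 + δa) - b * (1 + δb)) - (a - b)| = |a * δa - b * δb| := by ring_nf
    _ ≤ |a| * |δa| + |b| * |δb| := by grw [abs_sub, abs_mul, abs_mul]
    _ ≤ |a| * θ + |b| * θ := by gcongr
    _ = θ * (|a| + |b|) := by ring

/-- perturbation bound for the diagonal entries
`p_i = ∏_{k=1}^{i−1}(t_i − t_k)` of the bidiagonal decomposition of the Newton
collocation matrix: if `(i−1)·κ·θ < 1` with `κ = relgap⁻¹`, then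
`|p'_i − p_i| ≤ ((i−1)κθ/(1 − (i−1)κθ))·|p_i|`. Here `relgap` is the minimum
of `|t i − t j|/(|t i| + |t j|)` over `i ≠ j` (expressed via `IsLeast`).
(1-based node indexing: nodes `t 1, …, t (n+1)`.) -/
theorem newton_bidiagonal_diagonal_entry_perturbation
    (n : ℕ) (t : ℕ → ℝ)
    (ht : ∀ i j, 1 ≤ i → i ≤ n + 1 → 1 ≤ j → j ≤ n + 1 → i ≠ j → t i ≠ t j)
    (relgap : ℝ)
    (hrg : IsLeast {x : ℝ | ∃ i ∈ Finset.Icc 1 (n + 1), ∃ j ∈ Finset.Icc 1 (n + 1),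
      i ≠ j ∧ x = |t i - t j| / (|t i| + |t j|)} relgap)
    (θ : ℝ) (hθ : 0 ≤ θ)
    (δ : ℕ → ℝ) (hδ : ∀ i, 1 ≤ i → i ≤ n + 1 → |δ i| ≤ θ)
    (t' : ℕ → ℝ) (ht' : ∀ i, 1 ≤ i → i ≤ n + 1 → t' i = t i * (1 + δ i))
    (i : ℕ) (hi1 : 1 ≤ i) (hi2 : i ≤ n + 1)
    (hsmall : ((i : ℝ) - 1) * relgap⁻¹ * θ < 1) :
    |(∏ k ∈ Finset.Icc 1 (i - 1), (t' i - t' k)) -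
      ∏ k ∈ Finset.Icc 1 (i - 1), (t i - t k)| ≤
    ((i : ℝ) - 1) * relgap⁻¹ * θ / (1 - ((i : ℝ) - 1) * relgap⁻¹ * θ) *
      |∏ k ∈ Finset.Icc 1 (i - 1), (t i - t k)| := by
  have hgap : 0 < relgap := by
    obtain ⟨a, ha, b, hb, hab, rfl⟩ := hrg.1
    rw [mem_Icc] at ha hb
    exact abs_sub_div_abs_add_abs_pos (ht a b ha.1 ha.2 hb.1 hb.2 hab)
  have hfactor : ∀ k ∈ Icc 1 (i - 1),
      ‖(t' i - t' k) - (t i - t k)‖ ≤ relgap⁻¹ * θ * ‖t i - t k‖ := by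
    intro k hk
    rw [mem_Icc] at hk
    have hkn : k ≤ n + 1 := by omega
    have hki : i ≠ k := by omega
    rw [Real.norm_eq_abs, Real.norm_eq_abs, ht' i hi1 hi2, ht' k hk.1 hkn]
    calc _ ≤ θ * (|t i| + |t k|) :=
          abs_mul_one_add_sub_mul_one_add_sub_le (hδ i hi1 hi2) (hδ k hk.1 hkn)
      _ ≤ θ * (relgap⁻¹ * |t i - t k|) := by
          gcongr
          exact abs_add_abs_le_inv_mul_abs_sub hgap (ht i k hi1 hi2 hk.1 hkn hki)
            (hrg.2 ⟨i, mem_Icc.2 ⟨hi1, hi2⟩, k, mem_Icc.2 ⟨hk.1, hkn⟩, hki, rfl⟩)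
      _ = relgap⁻¹ * θ * |t i - t k| := by ring
  have hcard : (Icc 1 (i - 1)).card = i - 1 := by simp
  rw [← Nat.cast_pred hi1, mul_assoc] at hsmall ⊢
  have hprod := (Icc 1 (i - 1)).norm_prod_sub_prod_le (by positivity) hfactor
  rw [hcard] at hprod
  calc _ ≤ ((1 + relgap⁻¹ * θ) ^ (i - 1) - 1) * |∏ k ∈ Icc 1 (i - 1), (t i - t k)| := by
        simpa only [Real.norm_eq_abs] using hprod
    _ ≤ _ := by
        gcongr
        exact one_add_pow_sub_one_le (by linarith [mul_nonneg (inv_nonneg.2 hgap.le) hθ]) hsmall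
end

section
/- Let n ≥ 0 and let 0 < t_1 < t_2 < ⋯ < t_{n+1} be real numbers. Then the Vandermonde matrix V with entries V_{i,j} = t_i^{j−1}, 1 ≤ i, j ≤ n+1, is strictly totally positive: every minor of V, i.e., the determinant of every square submatrix obtained by choosing rows i_1 < ⋯ < i_r and columns j_1 < ⋯ < j_r, is strictly positive. -/
/-!
Every minor of the Vandermonde matrix is a generalized Vandermonde determinant `det (x_i ^ e_j)`
with positive increasing nodes `x` and increasing exponents `e`; these are positive by induction
on the size. Replacing the last node by a variable `s` turns the determinant into a polynomial
`P(s) = ∑ c_j s ^ e_j` whose top coefficient is the determinant for the first `r` nodes and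
exponents. `P` vanishes at the other `r` nodes, and by Descartes' rule of signs a
polynomial with at most `r + 1` nonzero coefficients has at most `r` positive roots, so `P` has no
root beyond them. As `P` is eventually positive, the intermediate value theorem gives
`P(x_last) > 0`.
-/

open Finset Polynomial Filter

namespace Polynomial

theorem signVariations_lt_card_support {R : Type*} [Semiring R] [LinearOrder R] {P : R[X]}
    (hP : P ≠ 0) : P.signVariations < P.support.card := by
  unfold signVariations coeffList
  rw [List.filter_map, List.filter_map, List.map_map]
  set L := ((List.range P.degree.succ).reverse.filter _)
  have hL : L.length ≤ P.support.card := by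
    have hnd : L.Nodup := (List.nodup_reverse.mpr List.nodup_range).filter _
    rw [← List.toFinset_card_of_nodup hnd]
    refine Finset.card_le_card fun i hi => mem_support_iff.mpr ?_
    simpa using (List.mem_filter.mp (List.mem_toFinset.mp hi)).2
  have hdestutter :=
    (List.destutter_sublist (· ≠ ·) (L.map (SignType.sign ∘ P.coeff))).length_le
  rw [List.length_map] at hdestutter
  have := P.support.card_pos.mpr (support_nonempty.mpr hP)
  omega

theorem card_lt_card_support_of_forall_pos_isRoot {R : Type*} [CommRing R] [LinearOrder R]
    [IsStrictOrderedRing R] {P : R[X]} (hP : P ≠ 0) {s : Finset R}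
    (hs : ∀ x ∈ s, 0 < x ∧ P.IsRoot x) : s.card < P.support.card := by
  have hsub : s.val ≤ P.roots.filter (0 < ·) := by
    refine (Multiset.le_iff_subset s.nodup).mpr fun x hx => ?_
    obtain ⟨hpos, hroot⟩ := hs x hx
    exact Multiset.mem_filter.mpr ⟨(mem_roots hP).mpr hroot, hpos⟩
  calc s.card ≤ P.roots.countP (0 < ·) := by
        rw [Multiset.countP_eq_card_filter]; exact Multiset.card_le_card hsub
    _ ≤ P.signVariations := roots_countP_pos_le_signVariations P
    _ < P.support.card := signVariations_lt_card_support hP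

theorem eventually_pos_of_leadingCoeff_pos {𝕜 : Type*} [NormedField 𝕜] [LinearOrder 𝕜]
    [IsStrictOrderedRing 𝕜] [OrderTopology 𝕜] {P : 𝕜[X]} (h : 0 < P.leadingCoeff) :
    ∀ᶠ s in atTop, 0 < P.eval s :=
  P.isEquivalent_atTop_lead.eventually_pos <|
    (eventually_gt_atTop 0).mono fun _ hs => mul_pos h (pow_pos hs _)

end Polynomial

theorem pos_of_eventually_pos_of_forall_ne_zero {α δ : Type*}
    [ConditionallyCompleteLinearOrder α] [TopologicalSpace α] [OrderTopology α] [DenselyOrdered α]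
    [LinearOrder δ] [TopologicalSpace δ] [OrderClosedTopology δ] [Zero δ] {f : α → δ} {a : α}
    (hf : ContinuousOn f (Set.Ici a)) (hne : ∀ c ≥ a, f c ≠ 0) (hev : ∀ᶠ s in atTop, 0 < f s) :
    0 < f a := by
  obtain ⟨b, hb, hab⟩ := (hev.and (eventually_ge_atTop a)).exists
  by_contra! hfa
  obtain ⟨c, hc, hfc⟩ := intermediate_value_Icc hab (hf.mono Set.Icc_subset_Ici_self)
    ⟨hfa, hb.le⟩
  exact hne c hc.1 hfc

def generalizedVandermonde {R : Type*} [CommRing R] {n : ℕ} (x : Fin n → R) (e : Fin n → ℕ) :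
    Matrix (Fin n) (Fin n) R :=
  .of fun i j => x i ^ e j

section LastNode

variable {R : Type*} [CommRing R] {r : ℕ} (x : Fin (r + 1) → R) (e : Fin (r + 1) → ℕ)

/-- Laplace expansion along the last row, with the last node as the variable. -/
noncomputable def lastNodePoly : R[X] :=
  ∑ j, monomial (e j)
    ((-1) ^ (r + j : ℕ) * (generalizedVandermonde (x ∘ Fin.castSucc) (e ∘ j.succAbove)).det)

theorem eval_lastNodePoly (s : R) :
    (lastNodePoly x e).eval s =
      (generalizedVandermonde (Function.update x (Fin.last r) s) e).det := by
  rw [Matrix.det_succ_row _ (Fin.last r), lastNodePoly, eval_finsetSum]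
  refine Finset.sum_congr rfl fun j _ => ?_
  simp only [generalizedVandermonde, Matrix.submatrix, Matrix.of_apply, Function.comp_apply,
    eval_monomial, Fin.val_last, Fin.succAbove_last, Function.update_self,
    Function.update_of_ne (Fin.castSucc_lt_last _).ne]
  ring

theorem support_lastNodePoly_subset : (lastNodePoly x e).support ⊆ univ.image e := by
  intro n hn
  by_contra hne
  simp only [lastNodePoly, mem_support_iff, finsetSum_coeff, coeff_monomial] at hn
  exact hn <| Finset.sum_eq_zero fun j _ =>
    if_neg fun (h : e j = n) => hne (h ▸ mem_image_of_mem e (mem_univ j))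

theorem coeff_lastNodePoly_last {e : Fin (r + 1) → ℕ} (he : Function.Injective e) :
    (lastNodePoly x e).coeff (e (Fin.last r)) =
      (generalizedVandermonde (x ∘ Fin.castSucc) (e ∘ Fin.castSucc)).det := by
  rw [lastNodePoly, finsetSum_coeff, Finset.sum_eq_single (Fin.last r)]
  · simp [Fin.succAbove_last, ← two_mul, pow_mul]
  · intro j _ hj
    rw [coeff_monomial, if_neg (he.ne hj)]
  · simp

theorem isRoot_lastNodePoly (i : Fin r) : (lastNodePoly x e).IsRoot (x i.castSucc) := by
  rw [IsRoot, eval_lastNodePoly]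
  refine Matrix.det_zero_of_row_eq (Fin.castSucc_lt_last i).ne ?_
  ext j
  simp [generalizedVandermonde, (Fin.castSucc_lt_last i).ne]

end LastNode

theorem eval_lastNodePoly_ne_zero {R : Type*} [CommRing R] [LinearOrder R] [IsStrictOrderedRing R]
    {r : ℕ} {x : Fin (r + 1) → R} {e : Fin (r + 1) → ℕ}
    (hx : StrictMono x) (hpos : ∀ i, 0 < x i) (hP : lastNodePoly x e ≠ 0) {c : R}
    (hc : x (Fin.last r) ≤ c) : (lastNodePoly x e).eval c ≠ 0 := by
  intro hroot
  have hlt : ∀ i : Fin r, x i.castSucc < c := fun i => (hx (Fin.castSucc_lt_last i)).trans_le hc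
  set roots := insert c (univ.image (x ∘ Fin.castSucc))
  have hroots : ∀ y ∈ roots, 0 < y ∧ (lastNodePoly x e).IsRoot y := by
    simp only [roots, mem_insert, mem_image, mem_univ, true_and, Function.comp_apply]
    rintro _ (rfl | ⟨i, rfl⟩)
    · exact ⟨(hpos _).trans_le hc, hroot⟩
    · exact ⟨hpos _, isRoot_lastNodePoly x e i⟩
  have hcard : roots.card = r + 1 := by
    rw [card_insert_of_notMem,
      card_image_of_injective _ (hx.comp Fin.strictMono_castSucc).injective, card_fin]
    simpa using fun i => (hlt i).ne
  have hsupp := (card_le_card (support_lastNodePoly_subset x e)).trans card_image_le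
  rw [card_univ, Fintype.card_fin] at hsupp
  have := card_lt_card_support_of_forall_pos_isRoot hP hroots
  omega

theorem det_generalizedVandermonde_pos {r : ℕ} {x : Fin r → ℝ} {e : Fin r → ℕ}
    (hx : StrictMono x) (hpos : ∀ i, 0 < x i) (he : StrictMono e) :
    0 < (generalizedVandermonde x e).det := by
  induction r with
  | zero => simp
  | succ r ih =>
    set P := lastNodePoly x e
    have hcoeff : 0 < P.coeff (e (Fin.last r)) := by
      rw [coeff_lastNodePoly_last x he.injective]
      exact ih (hx.comp Fin.strictMono_castSucc) (fun _ => hpos _)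
        (he.comp Fin.strictMono_castSucc)
    have hdeg : P.natDegree = e (Fin.last r) := by
      refine natDegree_eq_of_le_of_coeff_ne_zero ?_ hcoeff.ne'
      refine natDegree_le_iff_coeff_eq_zero.mpr fun N hN => notMem_support_iff.mp fun hmem => ?_
      obtain ⟨j, -, rfl⟩ := mem_image.mp (support_lastNodePoly_subset x e hmem)
      exact hN.not_ge (he.monotone (Fin.le_last j))
    have hP : P ≠ 0 := fun h => by simp [h] at hcoeff
    have := pos_of_eventually_pos_of_forall_ne_zero P.continuous.continuousOn
      (fun c hc => eval_lastNodePoly_ne_zero hx hpos hP hc)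
      (eventually_pos_of_leadingCoeff_pos (by rwa [leadingCoeff, hdeg]))
    rwa [eval_lastNodePoly, Function.update_eq_self] at this

/-- for positive strictly increasing nodes
`0 < t_1 < t_2 < ⋯ < t_{n+1}`, the Vandermonde matrix `V_{i,j} = t_i^{j−1}` is
strictly totally positive: every minor (determinant of a submatrix with
strictly increasing row and column indices) is strictly positive.
(1-based node indexing: nodes `t 1, …, t (n+1)`; matrix entry `(i,j)` has
1-based indices `i.val+1`, `j.val+1`.) -/
theorem vandermonde_strictly_totally_positive
    (n : ℕ) (t : ℕ → ℝ)
    (hpos : 0 < t 1)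
    (ht : ∀ i j, 1 ≤ i → i < j → j ≤ n + 1 → t i < t j)
    (V : Matrix (Fin (n + 1)) (Fin (n + 1)) ℝ)
    (hV : ∀ i j, V i j = (t (i.val + 1)) ^ j.val) :
    ∀ (r : ℕ) (f g : Fin r → Fin (n + 1)), StrictMono f → StrictMono g →
      0 < (V.submatrix f g).det := by
  intro r f g hf hg
  have hnode : StrictMono fun i : Fin (n + 1) => t (i + 1) := fun i j hij =>
    ht _ _ (by omega) (by simpa using hij) (by omega)
  have hnode_pos (i : Fin (n + 1)) : 0 < t (i + 1) :=
    hpos.trans_le (hnode.monotone (Fin.zero_le i))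
  have hV' : V.submatrix f g = generalizedVandermonde (fun i => t (f i + 1)) (fun j => g j) := by
    ext i j
    simp [hV, generalizedVandermonde]
  rw [hV']
  exact det_generalizedVandermonde_pos (hnode.comp hf) (fun _ => hnode_pos _)
    (Fin.val_strictMono.comp hg)
end
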